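/- arXiv:0802.3455 — 7 statements merged into one kernel-verified Lean document; each statement's English description precedes it below -/
import Mathlib

section
/- Define ℳ(z, μ) = (μ − z)² / (2·((2μ/3) + (z/3))·((2μ/3) + (z/3) − 1)) for 0 < μ < 1 and −2μ < z < 3 − 2μ. For any fixed μ ∈ (0, 1), the function z ↦ ℳ(z, μ) is strictly increasing on (−2μ, μ], satisfies ℳ(μ, μ) = 0, and ℳ(z, μ) → −∞ as z → −2μ from the right. -/
/-- **Lemma 1, increasing part.** Let `ℳ(z, μ) = (μ - z)² / (2 (2μ/3 + z/3) (2μ/3 + z/3 - 1))`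
for `0 < μ < 1` and `-2μ < z < 3 - 2μ`.  For any fixed `μ ∈ (0, 1)`, `z ↦ ℳ(z, μ)` is
strictly increasing on `(-2μ, μ]`, satisfies `ℳ(μ, μ) = 0`, and `ℳ(z, μ) → -∞` as
`z → -2μ` from the right. -/
theorem M_strictMono_left (μ : ℝ) (hμ0 : 0 < μ) (hμ1 : μ < 1) :
    StrictMonoOn
      (fun z : ℝ => (μ - z) ^ 2 / (2 * (2 * μ / 3 + z / 3) * (2 * μ / 3 + z / 3 - 1)))
      (Set.Ioc (-(2 * μ)) μ) ∧
    (μ - μ) ^ 2 / (2 * (2 * μ / 3 + μ / 3) * (2 * μ / 3 + μ / 3 - 1)) = 0 ∧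
    Filter.Tendsto
      (fun z : ℝ => (μ - z) ^ 2 / (2 * (2 * μ / 3 + z / 3) * (2 * μ / 3 + z / 3 - 1)))
      (nhdsWithin (-(2 * μ)) (Set.Ioi (-(2 * μ)))) Filter.atBot := by
  have hDneg : ∀ z : ℝ, -(2 * μ) < z → z < 3 - 2 * μ →
      2 * (2 * μ / 3 + z / 3) * (2 * μ / 3 + z / 3 - 1) < 0 := by
    intro z h1 h2
    have hpos : 0 < 2 * μ / 3 + z / 3 := by linarith
    have hneg : 2 * μ / 3 + z / 3 - 1 < 0 := by linarith
    nlinarith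
  refine ⟨?_, by simp, ?_⟩
  · rintro x ⟨hx1, hx2⟩ y ⟨hy1, hy2⟩ hxy
    simp only
    have hDx := hDneg x hx1 (by linarith)
    have hDy := hDneg y hy1 (by linarith)
    rcases eq_or_lt_of_le hy2 with rfl | hy2'
    · have hnum : 0 < (y - x) ^ 2 := pow_pos (by linarith) 2
      have h0 : (y - x) ^ 2 / (2 * (2 * y / 3 + x / 3) * (2 * y / 3 + x / 3 - 1)) < 0 :=
        div_neg_of_pos_of_neg hnum hDx
      simpa using h0.trans_le (by simp)
    · have hrw : ∀ a b : ℝ, a / b = -(a / -b) := fun a b => by rw [div_neg, neg_neg]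
      rw [hrw _ (2 * (2 * μ / 3 + x / 3) * (2 * μ / 3 + x / 3 - 1)),
        hrw _ (2 * (2 * μ / 3 + y / 3) * (2 * μ / 3 + y / 3 - 1)), neg_lt_neg_iff,
        div_lt_div_iff₀ (by linarith) (by linarith)]
      have ha : 0 < μ - x := by linarith
      have hb : 0 < μ - y := by linarith
      have hc : 0 < x + 2 * μ := by linarith
      have hd : 0 < y + 2 * μ := by linarith
      have he : 0 < 3 - 2 * μ - y := by linarith
      have hf : 0 < y - x := by linarith
      nlinarith [mul_pos ha hb, mul_pos hc hd, mul_pos (mul_pos ha hb) (mul_pos hc hf),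
        mul_pos (mul_pos ha hb) (mul_pos hd hf), mul_pos (mul_pos hc hd) (mul_pos he hf),
        mul_pos (mul_pos ha ha) (mul_pos hd hf), mul_pos (mul_pos hb hb) (mul_pos hc hf),
        sq_nonneg (x - y), mul_pos (mul_pos ha hb) (mul_pos he hf)]
  · set D : ℝ → ℝ := fun z => 2 * (2 * μ / 3 + z / 3) * (2 * μ / 3 + z / 3 - 1) with hD
    have hcont : Continuous D := by fun_prop
    have hD0 : D (-(2 * μ)) = 0 := by show 2 * (2 * μ / 3 + -(2 * μ) / 3) * (2 * μ / 3 + -(2 * μ) / 3 - 1) = 0; ring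
    have hnegD : Filter.Tendsto (fun z => -D z)
        (nhdsWithin (-(2 * μ)) (Set.Ioi (-(2 * μ)))) (nhdsWithin 0 (Set.Ioi 0)) := by
      apply tendsto_nhdsWithin_of_tendsto_nhds_of_eventually_within
      · have h : Filter.Tendsto (fun z => -D z)
            (nhdsWithin (-(2 * μ)) (Set.Ioi (-(2 * μ)))) (nhds (-D (-(2 * μ)))) :=
          (hcont.neg.tendsto (-(2 * μ))).mono_left nhdsWithin_le_nhds
        simpa [hD0] using h
      · filter_upwards [self_mem_nhdsWithin,
          eventually_nhdsWithin_of_eventually_nhds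
            (Filter.Tendsto.eventually_lt_const (by linarith : -(2*μ) < 3 - 2*μ) Filter.tendsto_id)] with
          z hz1 hz2
        exact Set.mem_Ioi.2 (by simpa using neg_pos.2 (hDneg z hz1 hz2))
    have hinv : Filter.Tendsto (fun z => ((-D z)⁻¹))
        (nhdsWithin (-(2 * μ)) (Set.Ioi (-(2 * μ)))) Filter.atTop :=
      hnegD.inv_tendsto_nhdsGT_zero
    have hnum : Filter.Tendsto (fun z : ℝ => (μ - z) ^ 2)
        (nhdsWithin (-(2 * μ)) (Set.Ioi (-(2 * μ)))) (nhds ((3 * μ) ^ 2)) := by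
      have h : Filter.Tendsto (fun z : ℝ => (μ - z) ^ 2)
          (nhds (-(2 * μ))) (nhds ((μ - -(2 * μ)) ^ 2)) :=
        ((continuous_const.sub continuous_id).pow 2).tendsto _
      have h2 : Filter.Tendsto (fun z : ℝ => (μ - z) ^ 2)
          (nhdsWithin (-(2 * μ)) (Set.Ioi (-(2 * μ)))) (nhds ((μ - -(2 * μ)) ^ 2)) :=
        h.mono_left nhdsWithin_le_nhds
      convert h2 using 2
      ring
    have hmul : Filter.Tendsto (fun z : ℝ => (μ - z) ^ 2 * (-D z)⁻¹)
        (nhdsWithin (-(2 * μ)) (Set.Ioi (-(2 * μ)))) Filter.atTop :=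
      hnum.pos_mul_atTop (by positivity) hinv
    refine ((Filter.tendsto_neg_atTop_atBot).comp hmul).congr fun z => ?_
    show -((μ - z) ^ 2 * (-D z)⁻¹) = _
    rw [div_eq_mul_inv, ← neg_inv]
    ring
end

section
/- Define ℳ(z, μ) = (μ − z)² / (2·((2μ/3) + (z/3))·((2μ/3) + (z/3) − 1)) for 0 < μ < 1 and −2μ < z < 3 − 2μ. For any fixed μ ∈ (0, 1), the function z ↦ ℳ(z, μ) is strictly decreasing on [μ, 3 − 2μ), satisfies ℳ(μ, μ) = 0, and ℳ(z, μ) → −∞ as z → 3 − 2μ from the left. -/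
open Filter Topology

lemma M_key_ineq (μ a b : ℝ) (hμ0 : 0 < μ) (hμ1 : μ < 1) (ha1 : μ ≤ a) (hab : a < b)
    (hb2 : b < 3 - 2*μ) :
    (μ - a)^2 * (-(2 * (2*μ/3 + b/3) * (2*μ/3 + b/3 - 1))) <
    (μ - b)^2 * (-(2 * (2*μ/3 + a/3) * (2*μ/3 + a/3 - 1))) := by
  have hba : 0 < b - a := by linarith
  have hu : 0 ≤ a - μ := by linarith
  have hv : 0 < b - μ := by linarith
  have h1 : 0 < (b-a)*(μ*(1-μ)*(b-μ)) :=
    mul_pos hba (mul_pos (mul_pos hμ0 (by linarith)) hv)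
  rcases le_or_gt μ (1/2) with hc | hc
  · have h2 : 0 ≤ (b-a)*(μ*(1-μ)*(a-μ)) :=
      mul_nonneg hba.le (mul_nonneg (mul_pos hμ0 (by linarith)).le hu)
    have h3 : 0 ≤ (b-a)*((a-μ)*(b-μ)*(1-2*μ)) :=
      mul_nonneg hba.le (mul_nonneg (mul_nonneg hu hv.le) (by linarith))
    nlinarith [h1, h2, h3]
  · have h2 : 0 ≤ (b-a)*((a-μ)*(2*μ-1)*(3-2*μ-b)) :=
      mul_nonneg hba.le (mul_nonneg (mul_nonneg hu (by linarith)) (by linarith))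
    have h3 : 0 ≤ (b-a)*((a-μ)*(1-μ)^2) :=
      mul_nonneg hba.le (mul_nonneg hu (sq_nonneg _))
    nlinarith [h1, h2, h3]

/-- **Lemma 1, decreasing part.** Let `ℳ(z, μ) = (μ - z)² / (2 (2μ/3 + z/3) (2μ/3 + z/3 - 1))`
for `0 < μ < 1` and `-2μ < z < 3 - 2μ`.  For any fixed `μ ∈ (0, 1)`, `z ↦ ℳ(z, μ)` is
strictly decreasing on `[μ, 3 - 2μ)`, satisfies `ℳ(μ, μ) = 0`, and `ℳ(z, μ) → -∞` as
`z → 3 - 2μ` from the left. -/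
theorem M_strictAnti_right (μ : ℝ) (hμ0 : 0 < μ) (hμ1 : μ < 1) :
    StrictAntiOn
      (fun z : ℝ => (μ - z) ^ 2 / (2 * (2 * μ / 3 + z / 3) * (2 * μ / 3 + z / 3 - 1)))
      (Set.Ico μ (3 - 2 * μ)) ∧
    (μ - μ) ^ 2 / (2 * (2 * μ / 3 + μ / 3) * (2 * μ / 3 + μ / 3 - 1)) = 0 ∧
    Filter.Tendsto
      (fun z : ℝ => (μ - z) ^ 2 / (2 * (2 * μ / 3 + z / 3) * (2 * μ / 3 + z / 3 - 1)))
      (nhdsWithin (3 - 2 * μ) (Set.Iio (3 - 2 * μ))) Filter.atBot := by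
  refine ⟨?_, by simp, ?_⟩
  · intro a ha b hb hab
    obtain ⟨ha1, ha2⟩ := ha
    obtain ⟨hb1, hb2⟩ := hb
    have hDa : 0 < -(2 * (2*μ/3 + a/3) * (2*μ/3 + a/3 - 1)) := by nlinarith
    have hDb : 0 < -(2 * (2*μ/3 + b/3) * (2*μ/3 + b/3 - 1)) := by nlinarith
    have e : ∀ z : ℝ, (μ - z) ^ 2 / (2 * (2*μ/3 + z/3) * (2*μ/3 + z/3 - 1)) =
        -((μ - z) ^ 2 / (-(2 * (2*μ/3 + z/3) * (2*μ/3 + z/3 - 1)))) := by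
      intro z; rw [div_neg, neg_neg]
    simp only [e]
    rw [neg_lt_neg_iff, div_lt_div_iff₀ hDa hDb]
    exact M_key_ineq μ a b hμ0 hμ1 ha1 hab hb2
  · set c : ℝ := 3 - 2 * μ with hc
    have hcont : Continuous (fun z : ℝ => -(2 * (2 * μ / 3 + z / 3) * (2 * μ / 3 + z / 3 - 1))) := by
      continuity
    have hden : Tendsto (fun z : ℝ => -(2 * (2 * μ / 3 + z / 3) * (2 * μ / 3 + z / 3 - 1)))
        (𝓝[<] c) (𝓝[>] 0) := by
      rw [tendsto_nhdsWithin_iff]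
      constructor
      · have hval : (0 : ℝ) = -(2 * (2 * μ / 3 + c / 3) * (2 * μ / 3 + c / 3 - 1)) := by
          rw [hc]; ring
        rw [hval]
        exact (hcont.tendsto c).mono_left nhdsWithin_le_nhds
      · filter_upwards [Ioo_mem_nhdsLT (show -(2*μ) < c by rw [hc]; linarith)]
          with z hz
        simp only [Set.mem_Ioi]
        nlinarith [hz.1, hz.2]
    have hnum : Tendsto (fun z : ℝ => (μ - z) ^ 2) (𝓝[<] c) (𝓝 ((μ - c) ^ 2)) :=
      ((continuous_const.sub continuous_id).pow 2).tendsto c |>.mono_left nhdsWithin_le_nhds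
    have hpos : 0 < (μ - c) ^ 2 := by
      have h1 : 0 < 1 - μ := by linarith
      have h2 : μ - c = 3 * μ - 3 := by rw [hc]; ring
      rw [h2]; nlinarith [mul_pos h1 h1]
    have hfrac : Tendsto (fun z : ℝ => (μ - z) ^ 2 *
        (-(2 * (2 * μ / 3 + z / 3) * (2 * μ / 3 + z / 3 - 1)))⁻¹) (𝓝[<] c) atTop :=
      Filter.Tendsto.pos_mul_atTop hpos hnum hden.inv_tendsto_nhdsGT_zero
    refine (tendsto_neg_atTop_atBot.comp hfrac).congr fun z => ?_
    simp only [Function.comp, inv_neg]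
    ring
end

section
/- Let X_1, ..., X_n be i.i.d. random variables with 0 ≤ X_i ≤ 1 and E[X_i] = μ ∈ (0, 1), and let X̄_n = (1/n)·Σ_{i=1}^n X_i. Then for any z with μ < z < 3 − 2μ, Pr{X̄_n ≥ z} < exp(n·ℳ(z, μ)), where ℳ(z, μ) = (μ − z)² / (2·((2μ + z)/3)·((2μ + z)/3 − 1)). -/
open MeasureTheory ProbabilityTheory



open Real

namespace MassartAux

variable (m : ℝ)

noncomputable def Df (x : ℝ) : ℝ := 2*((2*m+x)/3)*(1-(2*m+x)/3)
noncomputable def Dp (x : ℝ) : ℝ := (2/3)*(1-2*((2*m+x)/3))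
noncomputable def Gf (x : ℝ) : ℝ := (x-m)^2 / Df m x
noncomputable def G1 (x : ℝ) : ℝ := (2*(x-m)*Df m x - (x-m)^2*Dp m x)/(Df m x)^2
noncomputable def G2 (x : ℝ) : ℝ :=
  ((2*(Df m x) + (4/9)*(x-m)^2) * (Df m x)^2
    - (2*(x-m)*(Df m x) - (x-m)^2*(Dp m x)) * (2*(Df m x)*(Dp m x))) / ((Df m x)^2)^2
noncomputable def kl (x : ℝ) : ℝ :=
  x*Real.log x + (1-x)*Real.log (1-x) - x*Real.log m - (1-x)*Real.log (1-m)
noncomputable def Ff (x : ℝ) : ℝ := kl m x - Gf m x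
noncomputable def F1 (x : ℝ) : ℝ :=
  Real.log x - Real.log (1-x) - Real.log m + Real.log (1-m) - G1 m x
noncomputable def F2 (x : ℝ) : ℝ := x⁻¹ + (1-x)⁻¹ - G2 m x

lemma Df_pos (hm0 : 0 < m) (hm1 : m < 1) {x : ℝ} (hx1 : m ≤ x) (hx2 : x ≤ 1) : 0 < Df m x := by
  have h1 : 0 < (2*m+x)/3 := by nlinarith
  have h2 : (2*m+x)/3 < 1 := by nlinarith
  unfold Df; nlinarith

lemma hasDerivAt_Df (x : ℝ) : HasDerivAt (Df m) (Dp m x) x := by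
  have ha : HasDerivAt (fun x : ℝ => (2*m+x)/3) (1/3) x := by
    simpa using (((hasDerivAt_id x).const_add (2*m)).div_const 3)
  have := ((ha.const_mul 2).mul ((hasDerivAt_const x (1:ℝ)).sub ha))
  exact this.congr_deriv (by unfold Dp; simp only [Pi.sub_apply]; ring)

lemma hasDerivAt_sq (x : ℝ) : HasDerivAt (fun x : ℝ => (x-m)^2) (2*(x-m)) x := by
  have := ((hasDerivAt_id x).sub_const m).pow 2
  simp only [id_eq] at this
  exact this.congr_deriv (by ring)

lemma hasDerivAt_Gf {x : ℝ} (hD : Df m x ≠ 0) : HasDerivAt (Gf m) (G1 m x) x := by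
  exact (hasDerivAt_sq m x).div (hasDerivAt_Df m x) hD

lemma hasDerivAt_G1 {x : ℝ} (hD : Df m x ≠ 0) : HasDerivAt (G1 m) (G2 m x) x := by
  have hnum : HasDerivAt (fun x => 2*(x-m)*Df m x - (x-m)^2*Dp m x)
      (2*(Df m x) + (4/9)*(x-m)^2) x := by
    have h1 : HasDerivAt (fun x : ℝ => 2*(x-m)) 2 x := by
      simpa using ((hasDerivAt_id x).sub_const m).const_mul 2
    have h2 : HasDerivAt (Dp m) (-(4/9)) x := by
      have ha : HasDerivAt (fun x : ℝ => (2*m+x)/3) (1/3) x := by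
        simpa using (((hasDerivAt_id x).const_add (2*m)).div_const 3)
      have := ((hasDerivAt_const x (1:ℝ)).sub (ha.const_mul 2)).const_mul (2/3)
      exact this.congr_deriv (by ring)
    have := ((h1.mul (hasDerivAt_Df m x))).sub ((hasDerivAt_sq m x).mul h2)
    exact this.congr_deriv (by unfold Dp; ring)
  have hden : HasDerivAt (fun x => (Df m x)^2) (2*(Df m x)*(Dp m x)) x := by
    have := (hasDerivAt_Df m x).pow 2
    exact this.congr_deriv (by ring)
  have := hnum.div hden (pow_ne_zero 2 hD)
  exact this

set_option maxHeartbeats 2000000 in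
lemma F2_pos (hm0 : 0 < m) (hm1 : m < 1) {x : ℝ} (hx1 : m < x) (hx2 : x < 1) : 0 < F2 m x := by
  have hD : 0 < Df m x := Df_pos m hm0 hm1 hx1.le hx2.le
  have hx0 : 0 < x := lt_trans hm0 hx1
  have h1x : 0 < 1 - x := by linarith
  have hH : 0 < 27*(((2*m+x)/3)*(1-(2*m+x)/3)) - 81*(((2*m+x)/3)*(1-(2*m+x)/3))^2
      - 6*(x-m)*(1-2*((2*m+x)/3))*(1+((2*m+x)/3)*(1-(2*m+x)/3))
      + 4*(x-m)^2*(1-3*(((2*m+x)/3)*(1-(2*m+x)/3))) := by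
    nlinarith [sq_nonneg (x-m), sq_nonneg (x+m), mul_pos hm0 (sub_pos.2 hx1),
      mul_pos (sub_pos.2 hx1) (sub_pos.2 hx2), sq_nonneg (1-2*((2*m+x)/3)),
      mul_pos hm0 (sub_pos.2 hx2), sq_nonneg (x+2*m-1), sq_nonneg (x-m-1),
      sq_nonneg m, sq_nonneg x]
  have hrepr : F2 m x = (8/81)*(x-m)^2 *
      (27*(((2*m+x)/3)*(1-(2*m+x)/3)) - 81*(((2*m+x)/3)*(1-(2*m+x)/3))^2
      - 6*(x-m)*(1-2*((2*m+x)/3))*(1+((2*m+x)/3)*(1-(2*m+x)/3))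
      + 4*(x-m)^2*(1-3*(((2*m+x)/3)*(1-(2*m+x)/3))))
      / (x*(1-x)*(Df m x)^3) := by
    have hDne : (0:ℝ) < Df m x := hD
    unfold F2 G2
    rw [inv_eq_one_div, inv_eq_one_div, div_add_div _ _ hx0.ne' h1x.ne',
      div_sub_div _ _ (by positivity) (by positivity),
      div_eq_div_iff (by positivity) (by positivity)]
    unfold Df Dp
    ring
  rw [hrepr]
  have : 0 < x*(1-x)*(Df m x)^3 := by positivity
  have h2 : (0:ℝ) < (8/81)*(x-m)^2 := by
    have : x - m ≠ 0 := by linarith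
    positivity
  positivity


lemma hasDerivAt_one_sub (x : ℝ) : HasDerivAt (fun x : ℝ => 1 - x) (-1) x := by
  exact ((hasDerivAt_const x (1:ℝ)).sub (hasDerivAt_id x)).congr_deriv (by ring)

lemma hasDerivAt_kl (hm0 : 0 < m) (hm1 : m < 1) {x : ℝ} (hx0 : 0 < x) (hx1 : x < 1) :
    HasDerivAt (kl m) (Real.log x - Real.log (1-x) - Real.log m + Real.log (1-m)) x := by
  have h1 : HasDerivAt (fun x : ℝ => x*Real.log x) (Real.log x + 1) x :=
    Real.hasDerivAt_mul_log hx0.ne'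
  have h2 : HasDerivAt (fun x : ℝ => (1-x)*Real.log (1-x)) ((Real.log (1-x) + 1) * (-1)) x := by
    have := (Real.hasDerivAt_mul_log (by linarith : (1:ℝ)-x ≠ 0)).comp x (hasDerivAt_one_sub x)
    exact this
  have h3 : HasDerivAt (fun x : ℝ => x*Real.log m) (Real.log m) x := by
    simpa using (hasDerivAt_id x).mul_const (Real.log m)
  have h4 : HasDerivAt (fun x : ℝ => (1-x)*Real.log (1-m)) ((-1)*Real.log (1-m)) x :=
    (hasDerivAt_one_sub x).mul_const (Real.log (1-m))
  have := ((h1.add h2).sub h3).sub h4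
  exact this.congr_deriv (by ring)

lemma hasDerivAt_Ff (hm0 : 0 < m) (hm1 : m < 1) {x : ℝ} (hx0 : 0 < x) (hx1 : x < 1)
    (hD : Df m x ≠ 0) : HasDerivAt (Ff m) (F1 m x) x :=
  (hasDerivAt_kl m hm0 hm1 hx0 hx1).sub (hasDerivAt_Gf m hD)

lemma hasDerivAt_F1 (hm0 : 0 < m) (hm1 : m < 1) {x : ℝ} (hx0 : 0 < x) (hx1 : x < 1)
    (hD : Df m x ≠ 0) : HasDerivAt (F1 m) (F2 m x) x := by
  have h1 : HasDerivAt (fun x : ℝ => Real.log x) x⁻¹ x := Real.hasDerivAt_log hx0.ne'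
  have h2 : HasDerivAt (fun x : ℝ => Real.log (1-x)) ((1-x)⁻¹ * (-1)) x :=
    (Real.hasDerivAt_log (by linarith : (1:ℝ)-x ≠ 0)).comp x (hasDerivAt_one_sub x)
  have := ((((h1.sub h2).sub_const (Real.log m)).add_const (Real.log (1-m))).sub
    (hasDerivAt_G1 m hD))
  exact this.congr_deriv (by unfold F2; ring)

lemma F1_m_eq_zero : F1 m m = 0 := by
  unfold F1 G1
  simp only [sub_self]
  ring_nf

lemma F1_pos (hm0 : 0 < m) (hm1 : m < 1) {x : ℝ} (hx : x ∈ Set.Ioo m 1) : 0 < F1 m x := by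
  have mono : StrictMonoOn (F1 m) (Set.Ico m 1) := by
    apply strictMonoOn_of_deriv_pos (convex_Ico m 1)
    · intro y hy
      have hy0 : 0 < y := lt_of_lt_of_le hm0 hy.1
      exact (hasDerivAt_F1 m hm0 hm1 hy0 hy.2
        (Df_pos m hm0 hm1 hy.1 hy.2.le).ne').continuousAt.continuousWithinAt
    · intro y hy
      rw [interior_Ico] at hy
      have hy0 : 0 < y := lt_trans hm0 hy.1
      rw [(hasDerivAt_F1 m hm0 hm1 hy0 hy.2 (Df_pos m hm0 hm1 hy.1.le hy.2.le).ne').deriv]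
      exact F2_pos m hm0 hm1 hy.1 hy.2
  have := mono (Set.left_mem_Ico.2 hm1) ⟨hx.1.le, hx.2⟩ hx.1
  rwa [F1_m_eq_zero] at this

lemma continuous_kl : Continuous (kl m) := by
  unfold kl
  exact ((Real.continuous_mul_log.add
    (Real.continuous_mul_log.comp (continuous_const.sub continuous_id))).sub
    (continuous_id.mul continuous_const)).sub
    ((continuous_const.sub continuous_id).mul continuous_const)

lemma Ff_mono (hm0 : 0 < m) (hm1 : m < 1) : StrictMonoOn (Ff m) (Set.Icc m 1) := by
  apply strictMonoOn_of_deriv_pos (convex_Icc m 1)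
  · apply ContinuousOn.sub (continuous_kl m).continuousOn
    apply ContinuousOn.div
    · fun_prop
    · exact Continuous.continuousOn (by unfold Df; continuity)
    · exact fun x hx => (Df_pos m hm0 hm1 hx.1 hx.2).ne'
  · intro y hy
    rw [interior_Icc] at hy
    have hy0 : 0 < y := lt_trans hm0 hy.1
    rw [(hasDerivAt_Ff m hm0 hm1 hy0 hy.2 (Df_pos m hm0 hm1 hy.1.le hy.2.le).ne').deriv]
    exact F1_pos m hm0 hm1 hy

lemma key_ineq (hm0 : 0 < m) (hm1 : m < 1) {z : ℝ} (hz1 : m < z) (hz2 : z ≤ 1) :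
    (z-m)^2 / (2*((2*m+z)/3)*(1-(2*m+z)/3)) < kl m z := by
  have h := Ff_mono m hm0 hm1 ⟨le_refl m, hm1.le⟩ ⟨hz1.le, hz2⟩ hz1
  have hFm : Ff m m = 0 := by
    unfold Ff kl Gf
    simp only [sub_self]
    ring_nf
  rw [hFm] at h
  unfold Ff Gf Df at h
  linarith

lemma exists_good_t (hm0 : 0 < m) (hm1 : m < 1) {z : ℝ} (hz1 : m < z) (hz2 : z ≤ 1) :
    ∃ t : ℝ, 0 < t ∧
      -t*z + Real.log (1-m+m*Real.exp t)
        < (m - z)^2 / (2*((2*m+z)/3)*((2*m+z)/3 - 1)) := by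
  have hA0 : 0 < (2*m+z)/3 := by nlinarith
  have hA1 : (2*m+z)/3 < 1 := by nlinarith
  have hM : (m - z)^2 / (2*((2*m+z)/3)*((2*m+z)/3 - 1))
      = -((z-m)^2 / (2*((2*m+z)/3)*(1-(2*m+z)/3))) := by
    rw [show 2*((2*m+z)/3)*((2*m+z)/3 - 1) = -(2*((2*m+z)/3)*(1-(2*m+z)/3)) by ring,
      div_neg, show (m-z)^2 = (z-m)^2 by ring]
  have hkey := key_ineq m hm0 hm1 hz1 hz2
  rcases lt_or_eq_of_le hz2 with hzlt | hzeq
  · -- z < 1 : explicit optimal t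
    have hz0 : 0 < z := lt_trans hm0 hz1
    have h1z : 0 < 1 - z := by linarith
    have h1m : 0 < 1 - m := by linarith
    have hargpos : 0 < z*(1-m)/(m*(1-z)) := by positivity
    refine ⟨Real.log (z*(1-m)/(m*(1-z))), ?_, ?_⟩
    · apply Real.log_pos
      rw [lt_div_iff₀ (by positivity)]
      nlinarith
    · have hexp : Real.exp (Real.log (z*(1-m)/(m*(1-z)))) = z*(1-m)/(m*(1-z)) :=
        Real.exp_log hargpos
      have hval : 1-m+m*Real.exp (Real.log (z*(1-m)/(m*(1-z)))) = (1-m)/(1-z) := by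
        rw [hexp]; field_simp; ring
      rw [hval, hM]
      have hlog1 : Real.log (z*(1-m)/(m*(1-z)))
          = Real.log z + Real.log (1-m) - (Real.log m + Real.log (1-z)) := by
        rw [Real.log_div (by positivity) (by positivity),
          Real.log_mul hz0.ne' h1m.ne', Real.log_mul hm0.ne' h1z.ne']
      have hlog2 : Real.log ((1-m)/(1-z)) = Real.log (1-m) - Real.log (1-z) :=
        Real.log_div h1m.ne' h1z.ne'
      have hklz : -Real.log (z*(1-m)/(m*(1-z)))*z + Real.log ((1-m)/(1-z))
          = -(kl m z) := by
        rw [hlog1, hlog2]; unfold kl; ring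
      rw [hklz]
      linarith
  · -- z = 1 : take t large
    subst hzeq
    have hkl1 : kl m 1 = -Real.log m := by unfold kl; simp
    rw [hkl1] at hkey
    have htend : Filter.Tendsto (fun t : ℝ => Real.log (Real.exp (-t)*(1-m)+m))
        Filter.atTop (nhds (Real.log m)) := by
      have h0 : Filter.Tendsto (fun t : ℝ => Real.exp (-t)*(1-m)+m)
          Filter.atTop (nhds m) := by
        have := (Real.tendsto_exp_neg_atTop_nhds_zero.mul_const (1-m)).add_const m
        simpa using this
      exact ((Real.continuousAt_log hm0.ne').tendsto.comp h0)
    have hev : ∀ᶠ t : ℝ in Filter.atTop,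
        Real.log (Real.exp (-t)*(1-m)+m) < -((1-m)^2 / (2*((2*m+1)/3)*(1-(2*m+1)/3))) := by
      refine htend.eventually_lt_const ?_
      linarith
    obtain ⟨t, ht0, htlt⟩ := ((Filter.eventually_gt_atTop (0:ℝ)).and hev).exists
    refine ⟨t, ht0, ?_⟩
    have hpos : 0 < Real.exp (-t)*(1-m)+m := by nlinarith [Real.exp_pos (-t)]
    have hid : -t*1 + Real.log (1-m+m*Real.exp t)
        = Real.log (Real.exp (-t)*(1-m)+m) := by
      have h1 : (1-m+m*Real.exp t) * Real.exp (-t) = Real.exp (-t)*(1-m)+m := by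
        rw [Real.exp_neg]
        field_simp
      rw [← h1, Real.log_mul (by nlinarith [Real.exp_pos t]) (Real.exp_ne_zero _), Real.log_exp]
      ring
    rw [hid, hM]
    exact htlt

end MassartAux


/-- **Lemma 3, upper tail.** Let `X 1, ..., X n` be i.i.d. random variables with
`0 ≤ X i ≤ 1` and `E[X i] = μ ∈ (0, 1)`, and `X̄ₙ = (∑ i, X i) / n`.  Then for any `z` with
`μ < z < 3 - 2μ`, `Pr{X̄ₙ ≥ z} < exp (n ℳ(z, μ))`, where
`ℳ(z, μ) = (μ - z)² / (2 ((2μ + z)/3) ((2μ + z)/3 - 1))`. -/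
theorem massart_upper_tail {Ω : Type*} [MeasureSpace Ω] [IsProbabilityMeasure (ℙ : Measure Ω)]
    (n : ℕ) (hn : 0 < n) (X : Fin n → Ω → ℝ)
    (hmeas : ∀ i, Measurable (X i))
    (hindep : iIndepFun X)
    (hident : ∀ i j, IdentDistrib (X i) (X j))
    (hbound : ∀ i ω, X i ω ∈ Set.Icc (0 : ℝ) 1)
    (μ : ℝ) (hμ0 : 0 < μ) (hμ1 : μ < 1) (hmean : ∀ i, (∫ ω, X i ω) = μ)
    (z : ℝ) (hz1 : μ < z) (hz2 : z < 3 - 2 * μ) :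
    (ℙ {ω | z ≤ (∑ i, X i ω) / n}).toReal <
      Real.exp (n * ((μ - z) ^ 2 / (2 * ((2 * μ + z) / 3) * ((2 * μ + z) / 3 - 1)))) := by
  have hnpos : (0:ℝ) < (n:ℝ) := Nat.cast_pos.2 hn
  rcases le_or_gt z 1 with hzle | hzgt
  · -- main case
    obtain ⟨t, ht, hscalar⟩ := MassartAux.exists_good_t μ hμ0 hμ1 hz1 hzle
    set B := 1 - μ + μ * Real.exp t with hBdef
    have hB : 0 < B := by
      have := Real.exp_pos t
      nlinarith
    have hset : {ω | z ≤ (∑ i, X i ω) / n} = {ω | (n:ℝ)*z ≤ (∑ i, X i) ω} := by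
      ext ω
      simp only [Set.mem_setOf_eq, Finset.sum_apply]
      rw [le_div_iff₀ hnpos, mul_comm]
    have hXint : ∀ i, Integrable (X i) := fun i => by
      apply (integrable_const (1:ℝ)).mono' (hmeas i).aestronglyMeasurable
      filter_upwards with ω
      rw [Real.norm_eq_abs]
      exact abs_le.2 ⟨by linarith [(hbound i ω).1], (hbound i ω).2⟩
    have hExpint : ∀ i, Integrable (fun ω => Real.exp (t * X i ω)) := fun i => by
      apply (integrable_const (Real.exp t)).mono' ((hmeas i).const_mul t).exp.aestronglyMeasurable
      filter_upwards with ω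
      rw [Real.norm_eq_abs, abs_of_pos (Real.exp_pos _)]
      exact Real.exp_le_exp.2 (by nlinarith [(hbound i ω).1, (hbound i ω).2])
    have hSint : Integrable (fun ω => Real.exp (t * (∑ i, X i) ω)) :=
      hindep.integrable_exp_mul_sum hmeas (fun i _ => hExpint i)
    have hchernoff := measure_ge_le_exp_mul_mgf (μ := (ℙ : Measure Ω)) ((n:ℝ)*z) ht.le hSint
    have hmgf_le : ∀ i, mgf (X i) ℙ t ≤ B := fun i => by
      have hrhsint : Integrable (fun ω => 1 - X i ω + X i ω * Real.exp t) :=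
        ((integrable_const (1:ℝ)).sub (hXint i)).add ((hXint i).mul_const _)
      have hpt : ∀ ω, Real.exp (t * X i ω) ≤ 1 - X i ω + X i ω * Real.exp t := fun ω => by
        obtain ⟨h0, h1⟩ := hbound i ω
        have hcvx := convexOn_exp.2 (Set.mem_univ (0:ℝ)) (Set.mem_univ t)
          (by linarith : (0:ℝ) ≤ 1 - X i ω) h0 (by ring)
        simp only [smul_eq_mul, mul_zero, zero_add, Real.exp_zero, mul_one] at hcvx
        calc Real.exp (t * X i ω) = Real.exp (X i ω * t) := by rw [mul_comm]
          _ ≤ (1 - X i ω) * 1 + X i ω * Real.exp t := by simpa using hcvx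
          _ = 1 - X i ω + X i ω * Real.exp t := by ring
      calc mgf (X i) ℙ t = ∫ ω, Real.exp (t * X i ω) := rfl
        _ ≤ ∫ ω, (1 - X i ω + X i ω * Real.exp t) := integral_mono (hExpint i) hrhsint hpt
        _ = B := by
          have h1 : Integrable (fun ω => 1 - X i ω) := by
            exact (integrable_const (1:ℝ)).sub (hXint i)
          have h2 : Integrable (fun ω => X i ω * Real.exp t) := (hXint i).mul_const _
          rw [integral_add h1 h2, integral_mul_const, hmean i]
          have h3 : ∫ ω, (1 - X i ω) = 1 - μ := by
            rw [integral_sub (integrable_const (1:ℝ)) (hXint i), hmean i, integral_const]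
            simp
          rw [h3]
    have hprod : mgf (∑ i, X i) ℙ t = ∏ i, mgf (X i) ℙ t := hindep.mgf_sum hmeas Finset.univ
    have hBn : mgf (∑ i, X i) ℙ t ≤ B^n := by
      rw [hprod]
      calc ∏ i, mgf (X i) ℙ t ≤ ∏ _i : Fin n, B :=
            Finset.prod_le_prod (fun i _ => mgf_nonneg) (fun i _ => hmgf_le i)
        _ = B^n := by simp
    rw [hset]
    calc (ℙ {ω | (n:ℝ)*z ≤ (∑ i, X i) ω}).toReal
        ≤ Real.exp (-t*((n:ℝ)*z)) * mgf (∑ i, X i) ℙ t := hchernoff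
      _ ≤ Real.exp (-t*((n:ℝ)*z)) * B^n := by
          exact mul_le_mul_of_nonneg_left hBn (Real.exp_pos _).le
      _ = Real.exp ((n:ℝ) * (-t*z + Real.log B)) := by
          rw [show (n:ℝ) * (-t*z + Real.log B) = -t*((n:ℝ)*z) + (n:ℝ)*Real.log B by ring,
            Real.exp_add, Real.exp_nat_mul, Real.exp_log hB]
      _ < Real.exp (n * ((μ - z) ^ 2 / (2 * ((2 * μ + z) / 3) * ((2 * μ + z) / 3 - 1)))) := by
          exact Real.exp_lt_exp.2 (mul_lt_mul_of_pos_left hscalar hnpos)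
  · -- z > 1 : empty event
    have hempty : {ω | z ≤ (∑ i, X i ω) / n} = ∅ := by
      ext ω
      simp only [Set.mem_setOf_eq, Set.mem_empty_iff_false, iff_false, not_le]
      have hsum : ∑ i, X i ω ≤ (n:ℝ) := by
        calc ∑ i, X i ω ≤ ∑ _i : Fin n, (1:ℝ) :=
              Finset.sum_le_sum (fun i _ => (hbound i ω).2)
          _ = (n:ℝ) := by simp
      have : (∑ i, X i ω)/n ≤ 1 := by
        rw [div_le_one hnpos]; exact hsum
      linarith
    rw [hempty]
    simpa using Real.exp_pos _
end

section
/- Let X_1, ..., X_n be i.i.d. random variables with 0 ≤ X_i ≤ 1 and E[X_i] = μ ∈ (0, 1), and let X̄_n = (1/n)·Σ_{i=1}^n X_i. Then for any z with −2μ < z < μ, Pr{X̄_n ≤ z} < exp(n·ℳ(z, μ)), where ℳ(z, μ) = (μ − z)² / (2·((2μ + z)/3)·((2μ + z)/3 − 1)). -/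
open MeasureTheory ProbabilityTheory Real

lemma klLB {q p : ℝ} (hq : 0 ≤ q) (hqp : q < p) (hp : p < 1) :
    9 * (p - q) ^ 2 / (2 * ((2 * p + q) * (3 - 2 * p - q))) <
      q * (Real.log q - Real.log p) + (1 - q) * (Real.log (1 - q) - Real.log (1 - p)) := by
  set F : ℝ → ℝ := fun s =>
    q * (Real.log q - Real.log s) + (1 - q) * (Real.log (1 - q) - Real.log (1 - s))
      - 9 * (s - q) ^ 2 / (2 * ((2 * s + q) * (3 - 2 * s - q))) with hF
  have hFq : F q = 0 := by simp [hF]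
  have hcont2 : ContinuousOn (fun s => (1 - q) * (Real.log (1 - q) - Real.log (1 - s)))
      (Set.Icc q p) :=
    continuousOn_const.mul (continuousOn_const.sub
      ((Real.continuousOn_log.comp (continuousOn_const.sub continuousOn_id)) (fun x hx => by
        have : x ≤ p := hx.2
        simp only [Set.mem_compl_iff, Set.mem_singleton_iff]
        intro h; simp only [Pi.sub_apply, id_eq] at h; linarith [sub_eq_zero.mp h])))
  have hmono : StrictMonoOn F (Set.Icc q p) := by
    apply strictMonoOn_of_deriv_pos (convex_Icc q p)
    · -- continuity
      apply ContinuousOn.sub (ContinuousOn.add ?_ hcont2)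
      · -- the rational term
        rcases eq_or_lt_of_le hq with h0 | h0
        · have : (fun s => 9 * (s - q) ^ 2 / (2 * ((2 * s + q) * (3 - 2 * s - q))))
              = fun s => 9 * s / (4 * (3 - 2 * s)) := by
            funext s
            rcases eq_or_ne s 0 with rfl | hs
            · simp [← h0]
            · rw [← h0]
              have e1 : 2 * ((2 * s + 0) * (3 - 2 * s - 0)) = s * (4 * (3 - 2 * s)) := by ring
              have e2 : 9 * (s - 0) ^ 2 = s * (9 * s) := by ring
              rw [e1, e2, mul_div_mul_left _ _ hs]
          rw [this]
          apply ContinuousOn.div (continuousOn_const.mul continuousOn_id) (by fun_prop)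
          intro x hx
          have : x ≤ p := hx.2
          intro h; nlinarith
        · apply ContinuousOn.div (by fun_prop) (by fun_prop)
          intro x hx
          have h1 : q ≤ x := hx.1
          have h2 : x ≤ p := hx.2
          have : 0 < 2 * x + q := by linarith
          have : 0 < 3 - 2 * x - q := by linarith
          positivity
      · -- first log term
        rcases eq_or_lt_of_le hq with h0 | h0
        · have : (fun s => q * (Real.log q - Real.log s)) = fun _ => (0:ℝ) := by
            funext s; rw [← h0]; ring
          rw [this]; exact continuousOn_const
        · exact continuousOn_const.mul (continuousOn_const.sub
            (Real.continuousOn_log.mono (fun x hx => by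
              simp only [Set.mem_compl_iff, Set.mem_singleton_iff]
              have := hx.1; intro h; rw [h] at this; linarith)))
    · -- derivative positive on interior
      intro x hx
      rw [interior_Icc] at hx
      obtain ⟨hx1, hx2⟩ := hx
      have hx0 : 0 < x := lt_of_le_of_lt hq hx1
      have hxlt1 : x < 1 := lt_trans hx2 hp
      have hd1 : 0 < 2 * x + q := by linarith
      have hd2 : 0 < 3 - 2 * x - q := by linarith
      have hvne : 2 * ((2 * x + q) * (3 - 2 * x - q)) ≠ 0 := by positivity
      have h1 : HasDerivAt (fun s => q * (Real.log q - Real.log s)) (q * (0 - x⁻¹)) x :=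
        ((hasDerivAt_const x (Real.log q)).sub (Real.hasDerivAt_log hx0.ne')).const_mul q
      have hinner : HasDerivAt (fun s : ℝ => 1 - s) (-1) x := by
        simpa using (hasDerivAt_id' x).const_sub (1:ℝ)
      have h2' : HasDerivAt (fun s => Real.log (1 - s)) ((1 - x)⁻¹ * (-1)) x :=
        (Real.hasDerivAt_log (by intro h; rw [sub_eq_zero] at h; linarith)).comp x hinner
      have h2 : HasDerivAt (fun s => (1 - q) * (Real.log (1 - q) - Real.log (1 - s)))
          ((1 - q) * (0 - (1 - x)⁻¹ * (-1))) x :=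
        ((hasDerivAt_const x (Real.log (1 - q))).sub h2').const_mul (1 - q)
      have hu : HasDerivAt (fun s => 9 * (s - q) ^ 2) (9 * (2 * (x - q) ^ 1 * 1)) x :=
        (((hasDerivAt_id x).sub_const q).pow 2).const_mul 9
      have hv : HasDerivAt (fun s => 2 * ((2 * s + q) * (3 - 2 * s - q)))
          (2 * (2 * (3 - 2 * x - q) + (2 * x + q) * (-2))) x := by
        have ha : HasDerivAt (fun s : ℝ => 2 * s + q) 2 x := by
          simpa using ((hasDerivAt_id x).const_mul 2).add_const q
        have hb : HasDerivAt (fun s : ℝ => 3 - 2 * s - q) (-2) x := by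
          simpa using (((hasDerivAt_id x).const_mul 2).const_sub 3).sub_const q
        simpa using (ha.mul hb).const_mul 2
      have h3 : HasDerivAt (fun s => 9 * (s - q) ^ 2 / (2 * ((2 * s + q) * (3 - 2 * s - q))))
          ((9 * (2 * (x - q) ^ 1 * 1) * (2 * ((2 * x + q) * (3 - 2 * x - q)))
            - 9 * (x - q) ^ 2 * (2 * (2 * (3 - 2 * x - q) + (2 * x + q) * (-2))))
            / (2 * ((2 * x + q) * (3 - 2 * x - q))) ^ 2) x := hu.div hv hvne
      have hFd : HasDerivAt F (q * (0 - x⁻¹) + (1 - q) * (0 - (1 - x)⁻¹ * (-1))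
          - (9 * (2 * (x - q) ^ 1 * 1) * (2 * ((2 * x + q) * (3 - 2 * x - q)))
            - 9 * (x - q) ^ 2 * (2 * (2 * (3 - 2 * x - q) + (2 * x + q) * (-2))))
            / (2 * ((2 * x + q) * (3 - 2 * x - q))) ^ 2) x := (h1.add h2).sub h3
      rw [hFd.deriv]
      have key : q * (0 - x⁻¹) + (1 - q) * (0 - (1 - x)⁻¹ * (-1))
          - (9 * (2 * (x - q) ^ 1 * 1) * (2 * ((2 * x + q) * (3 - 2 * x - q)))
            - 9 * (x - q) ^ 2 * (2 * (2 * (3 - 2 * x - q) + (2 * x + q) * (-2))))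
            / (2 * ((2 * x + q) * (3 - 2 * x - q))) ^ 2
          = (x - q) ^ 3 * (2 * q ^ 2 + 20 * x * q - 12 * q + 32 * x ^ 2 - 42 * x + 18)
            / (2 * x * (1 - x) * ((2 * x + q) * (3 - 2 * x - q)) ^ 2) := by
        have hxne : x ≠ 0 := hx0.ne'
        have h1xne : (1 : ℝ) - x ≠ 0 := by intro h; nlinarith
        have hd1ne : 2 * x + q ≠ 0 := hd1.ne'
        have hd2ne : 3 - 2 * x - q ≠ 0 := hd2.ne'
        have hd1ne' : x * 2 + q ≠ 0 := by linarith
        have hd2ne' : 3 - x * 2 - q ≠ 0 := by linarith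
        field_simp
        ring
      rw [key]
      apply div_pos
      · apply mul_pos (pow_pos (sub_pos.mpr hx1) 3)
        nlinarith [sq_nonneg (4 * q + 20 * x - 12), mul_pos hx0 (by linarith : (0:ℝ) < 1 - x)]
      · exact mul_pos (mul_pos (by linarith) (by linarith)) (pow_pos (mul_pos hd1 hd2) 2)
  have := hmono (Set.left_mem_Icc.mpr hqp.le) (Set.right_mem_Icc.mpr hqp.le) hqp
  rw [hFq, hF] at this
  simp only at this
  linarith

lemma exists_good_t {μ z : ℝ} (hμ0 : 0 < μ) (hμ1 : μ < 1) (hz0 : 0 ≤ z) (hz : z < μ) :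
    ∃ t : ℝ, t ≤ 0 ∧
      -t * z + Real.log (1 - μ + μ * Real.exp t) <
        (μ - z) ^ 2 / (2 * ((2 * μ + z) / 3) * ((2 * μ + z) / 3 - 1)) := by
  set M : ℝ := (μ - z) ^ 2 / (2 * ((2 * μ + z) / 3) * ((2 * μ + z) / 3 - 1)) with hM
  have hA1 : 0 < 2 * μ + z := by linarith
  have hA2 : 2 * μ + z < 3 := by linarith
  have hMeq : M = -(9 * (μ - z) ^ 2 / (2 * ((2 * μ + z) * (3 - 2 * μ - z)))) := by
    have h5 : (2 * μ + z) * (3 - 2 * μ - z) ≠ 0 :=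
      (mul_pos hA1 (by linarith)).ne'
    have hden : 2 * ((2 * μ + z) / 3) * ((2 * μ + z) / 3 - 1)
        = -(2 * ((2 * μ + z) * (3 - 2 * μ - z))) / 9 := by ring
    have key : ∀ x w : ℝ, w ≠ 0 → x / (-w / 9) = -(9 * x / w) := by
      intro x w h
      field_simp
    rw [hM, hden, key _ _ (mul_ne_zero two_ne_zero h5)]
  have hkl := klLB hz0 hz hμ1
  have hMgt : -(z * (Real.log z - Real.log μ)
      + (1 - z) * (Real.log (1 - z) - Real.log (1 - μ))) < M := by
    rw [hMeq]; linarith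
  rcases eq_or_lt_of_le hz0 with h0 | h0
  · -- z = 0
    have hz' : z = 0 := h0.symm
    subst hz'
    have hM1 : Real.log (1 - μ) < M := by
      have : -((0:ℝ) * (Real.log 0 - Real.log μ)
          + (1 - 0) * (Real.log (1 - 0) - Real.log (1 - μ))) = Real.log (1 - μ) := by
        simp
      linarith [hMgt, this.symm.le]
    have hMneg : M < 0 := by
      rw [hMeq]
      have : 0 < 9 * (μ - 0) ^ 2 / (2 * ((2 * μ + 0) * (3 - 2 * μ - 0))) :=
        div_pos (by nlinarith) (by nlinarith)
      linarith
    set r : ℝ := Real.exp M with hr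
    have hr0 : 1 - μ < r := by
      calc 1 - μ = Real.exp (Real.log (1 - μ)) := (Real.exp_log (by linarith)).symm
      _ < r := Real.exp_lt_exp.mpr hM1
    have hr1 : r < 1 := by rw [hr, ← Real.exp_zero]; exact Real.exp_lt_exp.mpr hMneg
    set c : ℝ := (r - (1 - μ)) / (2 * μ) with hc
    have hc0 : 0 < c := by apply div_pos (by linarith) (by linarith)
    have hc1 : c < 1 := by rw [hc, div_lt_one (by linarith)]; linarith
    refine ⟨Real.log c, Real.log_nonpos hc0.le hc1.le, ?_⟩
    rw [Real.exp_log hc0]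
    have hval : 1 - μ + μ * c = (1 - μ + r) / 2 := by
      rw [hc]; field_simp; ring
    rw [hval]
    simp only [mul_zero, neg_mul, zero_add, neg_zero]
    calc Real.log ((1 - μ + r) / 2) < Real.log r :=
          Real.log_lt_log (by linarith) (by linarith)
    _ = M := by rw [hr, Real.log_exp]
  · -- z > 0
    have h1z : 0 < 1 - z := by linarith
    have h1μ : 0 < 1 - μ := by linarith
    have hargpos : 0 < μ * (1 - z) / ((1 - μ) * z) := by positivity
    have harg1 : 1 < μ * (1 - z) / ((1 - μ) * z) := by
      rw [lt_div_iff₀ (by positivity)]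
      nlinarith
    refine ⟨-Real.log (μ * (1 - z) / ((1 - μ) * z)),
      neg_nonpos.mpr (Real.log_nonneg harg1.le), ?_⟩
    have hexp : Real.exp (-Real.log (μ * (1 - z) / ((1 - μ) * z)))
        = (1 - μ) * z / (μ * (1 - z)) := by
      rw [Real.exp_neg, Real.exp_log hargpos, inv_div]
    rw [hexp]
    have hBval : 1 - μ + μ * ((1 - μ) * z / (μ * (1 - z))) = (1 - μ) / (1 - z) := by
      field_simp
      ring
    rw [hBval]
    have hlogarg : Real.log (μ * (1 - z) / ((1 - μ) * z))
        = Real.log μ + Real.log (1 - z) - (Real.log (1 - μ) + Real.log z) := by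
      rw [Real.log_div (by positivity) (by positivity), Real.log_mul hμ0.ne' h1z.ne',
        Real.log_mul h1μ.ne' h0.ne']
    have hlogdiv : Real.log ((1 - μ) / (1 - z)) = Real.log (1 - μ) - Real.log (1 - z) :=
      Real.log_div h1μ.ne' h1z.ne'
    have : - -Real.log (μ * (1 - z) / ((1 - μ) * z)) * z + Real.log ((1 - μ) / (1 - z))
        = -(z * (Real.log z - Real.log μ)
          + (1 - z) * (Real.log (1 - z) - Real.log (1 - μ))) := by
      rw [hlogarg, hlogdiv]; ring
    rw [this]
    exact hMgt

lemma exp_mul_le_of_mem_Icc {x t : ℝ} (h0 : 0 ≤ x) (h1 : x ≤ 1) :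
    Real.exp (t * x) ≤ 1 - x + x * Real.exp t := by
  have h := convexOn_exp.2 (Set.mem_univ (0 : ℝ)) (Set.mem_univ t)
    (by linarith : (0:ℝ) ≤ 1 - x) h0 (by ring)
  simp only [smul_eq_mul, mul_zero, Real.exp_zero, mul_one, zero_add] at h
  calc Real.exp (t * x) = Real.exp (x * t) := by rw [mul_comm]
  _ ≤ 1 - x + x * Real.exp t := by linarith

/-- **Lemma 3, lower tail.** Let `X 1, ..., X n` be i.i.d. random variables with
`0 ≤ X i ≤ 1` and `E[X i] = μ ∈ (0, 1)`, and `X̄ₙ = (∑ i, X i) / n`.  Then for any `z` with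
`-2μ < z < μ`, `Pr{X̄ₙ ≤ z} < exp (n ℳ(z, μ))`, where
`ℳ(z, μ) = (μ - z)² / (2 ((2μ + z)/3) ((2μ + z)/3 - 1))`. -/
theorem massart_lower_tail {Ω : Type*} [MeasureSpace Ω] [IsProbabilityMeasure (ℙ : Measure Ω)]
    (n : ℕ) (hn : 0 < n) (X : Fin n → Ω → ℝ)
    (hmeas : ∀ i, Measurable (X i))
    (hindep : iIndepFun X)
    (hident : ∀ i j, IdentDistrib (X i) (X j))
    (hbound : ∀ i ω, X i ω ∈ Set.Icc (0 : ℝ) 1)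
    (μ : ℝ) (hμ0 : 0 < μ) (hμ1 : μ < 1) (hmean : ∀ i, (∫ ω, X i ω) = μ)
    (z : ℝ) (hz1 : -(2 * μ) < z) (hz2 : z < μ) :
    (ℙ {ω | (∑ i, X i ω) / n ≤ z}).toReal <
      Real.exp (n * ((μ - z) ^ 2 / (2 * ((2 * μ + z) / 3) * ((2 * μ + z) / 3 - 1)))) := by
  rcases lt_or_ge z 0 with hz0 | hz0
  · -- z < 0 : the event is empty
    have hempty : {ω | (∑ i, X i ω) / n ≤ z} = ∅ := by
      rw [Set.eq_empty_iff_forall_notMem]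
      intro ω hω
      have hpos : 0 ≤ (∑ i, X i ω) / n :=
        div_nonneg (Finset.sum_nonneg fun i _ => (hbound i ω).1) (Nat.cast_nonneg n)
      exact absurd (le_trans hpos hω) (not_le.mpr hz0)
    rw [hempty]
    simp only [measure_empty, ENNReal.toReal_zero]
    exact Real.exp_pos _
  · -- z ≥ 0 : Chernoff bound
    obtain ⟨t, ht0, hlt⟩ := exists_good_t hμ0 hμ1 hz0 hz2
    have hn' : (0 : ℝ) < n := Nat.cast_pos.mpr hn
    -- integrability facts
    have hXint : ∀ i, Integrable (X i) ℙ := by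
      intro i
      refine (integrable_const (1 : ℝ)).mono' (hmeas i).aestronglyMeasurable ?_
      refine ae_of_all _ fun ω => ?_
      rw [Real.norm_eq_abs, abs_le]
      exact ⟨by linarith [(hbound i ω).1], (hbound i ω).2⟩
    have hexpint : ∀ i, Integrable (fun ω => Real.exp (t * X i ω)) ℙ := by
      intro i
      refine (integrable_const (1 : ℝ)).mono'
        (((hmeas i).const_mul t).exp).aestronglyMeasurable ?_
      refine ae_of_all _ fun ω => ?_
      rw [Real.norm_eq_abs, abs_of_pos (Real.exp_pos _), ← Real.exp_zero]
      exact Real.exp_le_exp.mpr (mul_nonpos_iff.mpr (Or.inr ⟨ht0, (hbound i ω).1⟩))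
    have hSint : Integrable (fun ω => Real.exp (t * (∑ i, X i) ω)) ℙ :=
      hindep.integrable_exp_mul_sum hmeas (fun i _ => hexpint i)
    -- set rewriting
    have hset : {ω | (∑ i, X i ω) / n ≤ z} = {ω | (∑ i, X i) ω ≤ z * n} := by
      ext ω
      simp only [Set.mem_setOf_eq, Finset.sum_apply]
      rw [div_le_iff₀ hn']
    -- Chernoff
    have hchern := measure_le_le_exp_mul_mgf (μ := (ℙ : Measure Ω)) (X := ∑ i, X i)
      (z * n) ht0 hSint
    -- bound on each mgf
    set B : ℝ := 1 - μ + μ * Real.exp t with hB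
    have hBpos : 0 < B := by
      have : 0 < μ * Real.exp t := mul_pos hμ0 (Real.exp_pos t)
      rw [hB]; linarith
    have hmgf_le : ∀ i, mgf (X i) ℙ t ≤ B := by
      intro i
      have hle : (∫ ω, Real.exp (t * X i ω)) ≤ ∫ ω, (1 - X i ω + X i ω * Real.exp t) := by
        refine integral_mono (hexpint i)
          (((integrable_const (1 : ℝ)).sub (hXint i)).add ((hXint i).mul_const _)) fun ω => ?_
        exact exp_mul_le_of_mem_Icc (hbound i ω).1 (hbound i ω).2
      have hint1 : Integrable (fun ω => 1 - X i ω) ℙ := (integrable_const (1 : ℝ)).sub (hXint i)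
      have hint2 : Integrable (fun ω => X i ω * Real.exp t) ℙ := (hXint i).mul_const _
      have heq : (∫ ω, (1 - X i ω + X i ω * Real.exp t)) = B := by
        rw [integral_add hint1 hint2, integral_sub (integrable_const (1 : ℝ)) (hXint i),
          integral_mul_const, integral_const, hmean i]
        simp [hB]
      rw [mgf]
      rw [heq] at hle
      exact hle
    have hmgf_sum : mgf (∑ i, X i) ℙ t ≤ B ^ n := by
      rw [hindep.mgf_sum hmeas]
      calc ∏ i, mgf (X i) ℙ t ≤ ∏ _i : Fin n, B :=
            Finset.prod_le_prod (fun i _ => mgf_nonneg) (fun i _ => hmgf_le i)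
      _ = B ^ n := by rw [Finset.prod_const, Finset.card_univ, Fintype.card_fin]
    -- combine
    rw [hset]
    calc (ℙ {ω | (∑ i, X i) ω ≤ z * n}).toReal
        ≤ Real.exp (-t * (z * n)) * mgf (∑ i, X i) ℙ t := hchern
    _ ≤ Real.exp (-t * (z * n)) * B ^ n :=
        mul_le_mul_of_nonneg_left hmgf_sum (Real.exp_pos _).le
    _ = Real.exp (-t * (z * n)) * Real.exp (n * Real.log B) := by
        rw [Real.exp_nat_mul, Real.exp_log hBpos]
    _ = Real.exp (n * (-t * z + Real.log B)) := by
        rw [← Real.exp_add]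
        ring_nf
    _ < Real.exp (n * ((μ - z) ^ 2 / (2 * ((2 * μ + z) / 3) * ((2 * μ + z) / 3 - 1)))) := by
        exact Real.exp_lt_exp.mpr (mul_lt_mul_of_pos_left hlt hn')
end

section
/- For every real μ with 0 < μ < 1, ln(μ) < 9(μ − 1) / (4(2μ + 1)). -/
/-- For every real `μ` with `0 < μ < 1`, `ln μ < 9 (μ - 1) / (4 (2μ + 1))`. -/
theorem log_lt_M_one (μ : ℝ) (hμ0 : 0 < μ) (hμ1 : μ < 1) :
    Real.log μ < 9 * (μ - 1) / (4 * (2 * μ + 1)) := by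
  set f : ℝ → ℝ := fun x => 9 * (x - 1) / (4 * (2 * x + 1)) - Real.log x with hf
  have hderiv : ∀ x ∈ Set.Ioo μ 1, HasDerivAt f (27 / (4 * (2*x+1)^2) - 1/x) x := by
    intro x hx
    have hx0 : 0 < x := lt_trans hμ0 hx.1
    have hne : (4 * (2 * x + 1)) ≠ 0 := by positivity
    have h1 : HasDerivAt (fun x : ℝ => 9 * (x - 1)) 9 x := by
      simpa using ((hasDerivAt_id x).sub_const 1).const_mul 9
    have h2 : HasDerivAt (fun x : ℝ => 4 * (2 * x + 1)) 8 x := by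
      have := (((hasDerivAt_id x).const_mul 2).add_const 1).const_mul 4; norm_num at this; simpa using this
    have h4 := (h1.div h2 hne).sub (Real.hasDerivAt_log hx0.ne')
    refine h4.congr_deriv ?_
    have hx1 : (2 * x + 1) ≠ 0 := by positivity
    field_simp [hx0.ne', hx1]
    ring
  have hcont : ContinuousOn f (Set.Icc μ 1) := by
    apply ContinuousOn.sub
    · apply ContinuousOn.div (by fun_prop) (by fun_prop)
      intro x hx
      have : 0 < x := lt_of_lt_of_le hμ0 hx.1
      positivity
    · apply Real.continuousOn_log.mono
      intro x hx
      have : 0 < x := lt_of_lt_of_le hμ0 hx.1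
      simp [this.ne']
  have hanti : StrictAntiOn f (Set.Icc μ 1) := by
    apply strictAntiOn_of_deriv_neg (convex_Icc μ 1) hcont
    intro x hx
    rw [interior_Icc] at hx
    have hx0 : 0 < x := lt_trans hμ0 hx.1
    rw [(hderiv x hx).deriv]
    rw [sub_neg, div_lt_div_iff₀ (by positivity) hx0]
    nlinarith [sq_nonneg (4*x - 11/8)]
  have h := hanti (Set.left_mem_Icc.mpr hμ1.le) (Set.right_mem_Icc.mpr hμ1.le) hμ1
  simp only [hf, Real.log_one] at h
  linarith
end

section
/- Let K be a binomial random variable with Pr{K = i} = C(n, i)·p^i·(1 − p)^{n − i} for i = 0, 1, ..., n, where p ∈ (0, 1) and n is a positive integer. Let a, b be arbitrary real numbers and η ∈ (0, 1). Define T⁻ = max{a, ⌈np + (1 − 2p − √(1 + 18np(1 − p)/ln(2/η))) / (2/(3n) + 3/ln(2/η))⌉} and T⁺ = min{b, ⌊np + (1 − 2p + √(1 + 18np(1 − p)/ln(2/η))) / (2/(3n) + 3/ln(2/η))⌋}. Then Pr{T⁻ ≤ K ≤ T⁺} ≤ Pr{a ≤ K ≤ b} < Pr{T⁻ ≤ K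 ≤ T⁺} + η. -/
open MeasureTheory ProbabilityTheory

open Real Set

lemma Q2_nonneg {p q : ℝ} (hp : 0 ≤ p) (hq : q ≤ 1) (hpq : p ≤ q) :
    0 ≤ 27*q - 54*q^2 + 36*q^3 - q^4 + 216*p - 486*p*q + 378*p*q^2 - 68*p*q^3
      - 432*p^2 + 756*p^2*q - 276*p^2*q^2 + 288*p^3 - 320*p^3*q - 64*p^4 := by
  have hu : (0:ℝ) ≤ 1 - q := by linarith
  have hs : (0:ℝ) ≤ q - p := by linarith
  nlinarith [pow_nonneg hs 5, mul_nonneg hu (pow_nonneg hs 4),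
    mul_nonneg (pow_nonneg hu 2) (pow_nonneg hs 3),
    mul_nonneg (pow_nonneg hu 3) (pow_nonneg hs 2),
    mul_nonneg (pow_nonneg hu 4) hs,
    mul_nonneg hp (pow_nonneg hs 4),
    mul_nonneg (mul_nonneg hp hu) (pow_nonneg hs 3),
    mul_nonneg (mul_nonneg hp (pow_nonneg hu 2)) (pow_nonneg hs 2),
    mul_nonneg (mul_nonneg hp (pow_nonneg hu 3)) hs,
    mul_nonneg hp (pow_nonneg hu 4),
    mul_nonneg (pow_nonneg hp 2) (pow_nonneg hs 3),
    mul_nonneg (mul_nonneg (pow_nonneg hp 2) hu) (pow_nonneg hs 2),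
    mul_nonneg (pow_nonneg hp 3) (pow_nonneg hs 2),
    mul_nonneg (mul_nonneg (pow_nonneg hp 3) hu) hs,
    mul_nonneg (pow_nonneg hp 4) hs,
    mul_nonneg (pow_nonneg hp 4) hu]


section KL
variable {p : ℝ}

-- derivative of the rational part r(z) = 9(z-p)^2 / (2(z+2p)(3-z-2p))
private lemma hasDerivAt_v (p z : ℝ) :
    HasDerivAt (fun z => 2*(z+2*p)*(3-z-2*p)) (2*(3-2*z-4*p)) z := by
  have h : HasDerivAt (fun z : ℝ => 2*(z+2*p)*(3-z-2*p))
      (2*1*(3-z-2*p) + 2*(z+2*p)*(-1)) z := by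
    have h1 : HasDerivAt (fun z : ℝ => 2*(z+2*p)) (2*1) z := by
      simpa using ((hasDerivAt_id z).add_const (2*p)).const_mul 2
    have h2 : HasDerivAt (fun z : ℝ => 3-z-2*p) (-1) z := by
      simpa using ((hasDerivAt_id z).const_sub 3).sub_const (2*p)
    simpa using h1.fun_mul h2
  convert h using 1; ring

private lemma hasDerivAt_u (p z : ℝ) :
    HasDerivAt (fun z => 9*(z-p)^2) (18*(z-p)) z := by
  have h : HasDerivAt (fun z : ℝ => 9*(z-p)^2) (9*(2*(z-p)^1*1)) z := by
    exact (((hasDerivAt_id z).sub_const p).pow 2).const_mul 9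
  convert h using 1; ring

private lemma hasDerivAt_r (p z : ℝ) (hv : 2*(z+2*p)*(3-z-2*p) ≠ 0) :
    HasDerivAt (fun z => 9*(z-p)^2 / (2*(z+2*p)*(3-z-2*p)))
      ((18*(z-p)*(2*(z+2*p)*(3-z-2*p)) - 9*(z-p)^2*(2*(3-2*z-4*p)))
        / (2*(z+2*p)*(3-z-2*p))^2) z :=
  (hasDerivAt_u p z).div (hasDerivAt_v p z) hv
end KL

section KL2
-- G nonneg: level-2 argument
private lemma G_nonneg (p c : ℝ) (hp0 : 0 < p) (hp1 : p < 1) (hc : c ∈ Set.Ioo p 1) :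
    0 ≤ Real.log c - Real.log p - Real.log (1-c) + Real.log (1-p)
      - (18*(c-p)*(2*(c+2*p)*(3-c-2*p)) - 9*(c-p)^2*(2*(3-2*c-4*p)))
        / (2*(c+2*p)*(3-c-2*p))^2 := by
  obtain ⟨hpc, hc1⟩ := hc
  set G : ℝ → ℝ := fun z => Real.log z - Real.log p - Real.log (1-z) + Real.log (1-p)
      - (18*(z-p)*(2*(z+2*p)*(3-z-2*p)) - 9*(z-p)^2*(2*(3-2*z-4*p)))
        / (2*(z+2*p)*(3-z-2*p))^2 with hG
  -- facts on the interval
  have hvpos : ∀ z ∈ Set.Icc p c, 0 < 2*(z+2*p)*(3-z-2*p) := by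
    intro z hz
    have h1 : 0 < z + 2*p := by nlinarith [hz.1]
    have h2 : 0 < 3 - z - 2*p := by nlinarith [hz.2]
    positivity
  -- derivative of G
  have hderiv : ∀ z ∈ Set.Ioo p c, HasDerivAt G
      (1/z + 1/(1-z) -
        ((18*(2*(z+2*p)*(3-z-2*p)) + 36*(z-p)^2) * (2*(z+2*p)*(3-z-2*p))^2
          - (18*(z-p)*(2*(z+2*p)*(3-z-2*p)) - 9*(z-p)^2*(2*(3-2*z-4*p)))
            * (2*(2*(z+2*p)*(3-z-2*p))*(2*(3-2*z-4*p))))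
          / (2*(z+2*p)*(3-z-2*p))^4) z := by
    intro z hz
    have hz0 : 0 < z := lt_trans hp0 hz.1
    have hz1 : z < 1 := lt_trans hz.2 hc1
    have hv := hvpos z ⟨hz.1.le, hz.2.le⟩
    have hvne := hv.ne'
    have hlog1 : HasDerivAt (fun z : ℝ => Real.log z) (1/z) z := by
      simpa [one_div] using Real.hasDerivAt_log hz0.ne'
    have hlog2 : HasDerivAt (fun z : ℝ => Real.log (1-z)) (-(1/(1-z))) z := by
      have hinner : HasDerivAt (fun z : ℝ => 1-z) (-1) z := by
        simpa using (hasDerivAt_id z).const_sub 1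
      have := (Real.hasDerivAt_log (by linarith : (1:ℝ)-z ≠ 0)).comp z hinner
      exact this.congr_deriv (by ring)
    -- derivative of the rational part w/v^2
    have hw : HasDerivAt (fun z => 18*(z-p)*(2*(z+2*p)*(3-z-2*p)) - 9*(z-p)^2*(2*(3-2*z-4*p)))
        (18*(2*(z+2*p)*(3-z-2*p)) + 36*(z-p)^2) z := by
      have h1 : HasDerivAt (fun z : ℝ => 18*(z-p)) 18 z := by
        simpa using ((hasDerivAt_id z).sub_const p).const_mul 18
      have h2 := hasDerivAt_v p z
      have h3 := hasDerivAt_u p z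
      have h4 : HasDerivAt (fun z : ℝ => 2*(3-2*z-4*p)) (-4) z := by
        have : HasDerivAt (fun z : ℝ => 3-2*z-4*p) (-2) z := by
          have := ((hasDerivAt_id z).const_mul 2).const_sub 3
          simpa using this.sub_const (4*p)
        have h := this.const_mul (2:ℝ)
        exact h.congr_deriv (by norm_num)
      have h5 := (h1.fun_mul h2).fun_sub (h3.fun_mul h4)
      exact h5.congr_deriv (by ring)
    have hv2 : HasDerivAt (fun z => (2*(z+2*p)*(3-z-2*p))^2)
        (2*(2*(z+2*p)*(3-z-2*p))*(2*(3-2*z-4*p))) z := by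
      have := ((hasDerivAt_v p z).fun_pow 2)
      exact this.congr_deriv (by ring)
    have hv2ne : (2*(z+2*p)*(3-z-2*p))^2 ≠ 0 := pow_ne_zero 2 hvne
    have hrat := hw.fun_div hv2 hv2ne
    have htot := ((hlog1.sub_const (Real.log p)).fun_sub hlog2).add_const (Real.log (1-p))
    have := htot.fun_sub hrat
    exact this.congr_deriv (by ring)
  -- nonnegativity of the derivative via the Handelman certificate
  have hH : ∀ z ∈ Set.Ioo p c, (0:ℝ) ≤ 1/z + 1/(1-z) -
        ((18*(2*(z+2*p)*(3-z-2*p)) + 36*(z-p)^2) * (2*(z+2*p)*(3-z-2*p))^2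
          - (18*(z-p)*(2*(z+2*p)*(3-z-2*p)) - 9*(z-p)^2*(2*(3-2*z-4*p)))
            * (2*(2*(z+2*p)*(3-z-2*p))*(2*(3-2*z-4*p))))
          / (2*(z+2*p)*(3-z-2*p))^4 := by
    intro z hz
    have hz0 : 0 < z := lt_trans hp0 hz.1
    have hz1 : z < 1 := lt_trans hz.2 hc1
    have h1 : 0 < z + 2*p := by linarith
    have h2 : 0 < 3 - z - 2*p := by linarith
    have key : 1/z + 1/(1-z) -
        ((18*(2*(z+2*p)*(3-z-2*p)) + 36*(z-p)^2) * (2*(z+2*p)*(3-z-2*p))^2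
          - (18*(z-p)*(2*(z+2*p)*(3-z-2*p)) - 9*(z-p)^2*(2*(3-2*z-4*p)))
            * (2*(2*(z+2*p)*(3-z-2*p))*(2*(3-2*z-4*p))))
          / (2*(z+2*p)*(3-z-2*p))^4
        = (z-p)^2 * (27*z - 54*z^2 + 36*z^3 - z^4 + 216*p - 486*p*z + 378*p*z^2
            - 68*p*z^3 - 432*p^2 + 756*p^2*z - 276*p^2*z^2 + 288*p^3 - 320*p^3*z - 64*p^4)
          / (z*(1-z)*((z+2*p)*(3-z-2*p))^3) := by
      have hne1 : z ≠ 0 := hz0.ne'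
      have hne2 : (1:ℝ) - z ≠ 0 := by linarith
      have hne3 : z + 2*p ≠ 0 := h1.ne'
      have hne4 : (3:ℝ) - z - 2*p ≠ 0 := h2.ne'
      field_simp
      ring
    rw [key]
    apply div_nonneg
    · exact mul_nonneg (sq_nonneg _) (Q2_nonneg hp0.le hz1.le hz.1.le)
    · have : 0 < z*(1-z)*((z+2*p)*(3-z-2*p))^3 := by
        have h3 : 0 < (1:ℝ) - z := by linarith
        positivity
      exact this.le
  -- G is monotone on [p, c]
  have hcont : ContinuousOn G (Set.Icc p c) := by
    rw [hG]
    apply ContinuousOn.sub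
    · apply ContinuousOn.add
      · apply ContinuousOn.sub
        · apply ContinuousOn.sub
          · exact fun z hz => (Real.continuousAt_log (lt_of_lt_of_le hp0 hz.1).ne').continuousWithinAt
          · exact continuousOn_const
        · apply ContinuousOn.log
          · exact (continuous_const.sub continuous_id).continuousOn
          · intro z hz
            have : z < 1 := lt_of_le_of_lt hz.2 hc1
            intro h; rw [sub_eq_zero] at h; exact this.ne h.symm
      · exact continuousOn_const
    · apply ContinuousOn.div
      · fun_prop
      · fun_prop
      · intro z hz
        exact pow_ne_zero 2 (hvpos z hz).ne'
  have hdiff : DifferentiableOn ℝ G (interior (Set.Icc p c)) := by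
    rw [interior_Icc]
    exact fun z hz => ((hderiv z hz).differentiableAt).differentiableWithinAt
  have hmono : MonotoneOn G (Set.Icc p c) := by
    apply monotoneOn_of_deriv_nonneg (convex_Icc p c) hcont hdiff
    intro z hz
    rw [interior_Icc] at hz
    rw [(hderiv z hz).deriv]
    exact hH z hz
  have hGp : G p = 0 := by
    rw [hG]
    have hvne : (2*(p+2*p)*(3-p-2*p))^2 ≠ 0 := by
      have h1 : 0 < p + 2*p := by linarith
      have h2 : 0 < 3 - p - 2*p := by linarith
      positivity
    field_simp
    ring
  have := hmono (Set.left_mem_Icc.2 (le_of_lt hpc)) (Set.right_mem_Icc.2 (le_of_lt hpc)) (le_of_lt hpc)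
  rw [hGp] at this
  exact this

end KL2

lemma kl_ge_right (p q : ℝ) (hp0 : 0 < p) (hp1 : p < 1) (hq1 : p ≤ q) (hq2 : q ≤ 1) :
    9*(q-p)^2 / (2*(q+2*p)*(3-q-2*p)) ≤
      q * Real.log (q/p) + (1-q) * Real.log ((1-q)/(1-p)) := by
  set F : ℝ → ℝ := fun z => z * Real.log z - z * Real.log p + (1-z) * Real.log (1-z)
      - (1-z) * Real.log (1-p) - 9*(z-p)^2/(2*(z+2*p)*(3-z-2*p)) with hF
  have hvpos : ∀ z ∈ Set.Icc p 1, 0 < 2*(z+2*p)*(3-z-2*p) := by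
    intro z hz
    have h1 : 0 < z + 2*p := by nlinarith [hz.1]
    have h2 : 0 < 3 - z - 2*p := by nlinarith [hz.2]
    positivity
  have hderiv : ∀ z ∈ Set.Ioo p 1, HasDerivAt F
      (Real.log z - Real.log p - Real.log (1-z) + Real.log (1-p)
      - (18*(z-p)*(2*(z+2*p)*(3-z-2*p)) - 9*(z-p)^2*(2*(3-2*z-4*p)))
        / (2*(z+2*p)*(3-z-2*p))^2) z := by
    intro z hz
    have hz0 : 0 < z := lt_of_lt_of_le hp0 hz.1.le
    have hz1 : (0:ℝ) < 1 - z := by linarith [hz.2]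
    have h1 : HasDerivAt (fun z : ℝ => z * Real.log z) (Real.log z + 1) z :=
      Real.hasDerivAt_mul_log hz0.ne'
    have h2 : HasDerivAt (fun z : ℝ => z * Real.log p) (Real.log p) z := by
      simpa using (hasDerivAt_id z).mul_const (Real.log p)
    have hinner : HasDerivAt (fun z : ℝ => 1-z) (-1) z := by
      simpa using (hasDerivAt_id z).const_sub 1
    have h3 : HasDerivAt (fun z : ℝ => (1-z) * Real.log (1-z))
        ((Real.log (1-z) + 1) * (-1)) z :=
      (Real.hasDerivAt_mul_log hz1.ne').comp z hinner
    have h4 : HasDerivAt (fun z : ℝ => (1-z) * Real.log (1-p)) (-Real.log (1-p)) z := by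
      have := hinner.mul_const (Real.log (1-p))
      exact this.congr_deriv (by ring)
    have h5 := hasDerivAt_r p z (hvpos z ⟨hz.1.le, hz.2.le⟩).ne'
    have htot := (((h1.fun_sub h2).fun_add h3).fun_sub h4).fun_sub h5
    exact htot.congr_deriv (by ring)
  have hcont : ContinuousOn F (Set.Icc p 1) := by
    rw [hF]
    apply ContinuousOn.sub
    · apply ContinuousOn.sub
      · apply ContinuousOn.add
        · apply ContinuousOn.sub
          · exact Real.continuous_mul_log.continuousOn
          · fun_prop
        · exact (Real.continuous_mul_log.comp (continuous_const.sub continuous_id)).continuousOn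
      · fun_prop
    · apply ContinuousOn.div
      · fun_prop
      · fun_prop
      · intro z hz; exact (hvpos z hz).ne'
  have hdiff : DifferentiableOn ℝ F (interior (Set.Icc p 1)) := by
    rw [interior_Icc]
    exact fun z hz => ((hderiv z hz).differentiableAt).differentiableWithinAt
  have hmono : MonotoneOn F (Set.Icc p 1) := by
    apply monotoneOn_of_deriv_nonneg (convex_Icc p 1) hcont hdiff
    intro z hz
    rw [interior_Icc] at hz
    rw [(hderiv z hz).deriv]
    exact G_nonneg p z hp0 hp1 hz
  have hFp : F p = 0 := by
    rw [hF]
    have := (hvpos p (Set.left_mem_Icc.2 (le_trans hq1 hq2))).ne'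
    field_simp
    ring
  have hFq : 0 ≤ F q := by
    have := hmono (Set.left_mem_Icc.2 (le_trans hq1 hq2)) (Set.mem_Icc.2 ⟨hq1, hq2⟩) hq1
    rw [hFp] at this; exact this
  have hq0 : 0 < q := lt_of_lt_of_le hp0 hq1
  have hexp : q * Real.log (q/p) + (1-q) * Real.log ((1-q)/(1-p)) =
      q * Real.log q - q * Real.log p + (1-q) * Real.log (1-q) - (1-q) * Real.log (1-p) := by
    rw [Real.log_div hq0.ne' hp0.ne']
    rcases eq_or_lt_of_le hq2 with h|h
    · rw [← h]; ring_nf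
    · rw [Real.log_div (by linarith : (1:ℝ)-q ≠ 0) (by linarith : (1:ℝ)-p ≠ 0)]
      ring
  rw [hexp]
  rw [hF] at hFq
  linarith [hFq]

lemma kl_ge (p q : ℝ) (hp0 : 0 < p) (hp1 : p < 1) (hq1 : 0 ≤ q) (hq2 : q ≤ 1) :
    9*(q-p)^2 / (2*(q+2*p)*(3-q-2*p)) ≤
      q * Real.log (q/p) + (1-q) * Real.log ((1-q)/(1-p)) := by
  rcases le_total p q with h|h
  · exact kl_ge_right p q hp0 hp1 h hq2
  · have := kl_ge_right (1-p) (1-q) (by linarith) (by linarith) (by linarith) (by linarith)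
    have heq1 : (1:ℝ)-(1-q) = q := by ring
    have heq2 : (1:ℝ)-(1-p) = p := by ring
    rw [heq1, heq2] at this
    have hlhs : 9*((1-q)-(1-p))^2 / (2*((1-q)+2*(1-p))*(3-(1-q)-2*(1-p)))
        = 9*(q-p)^2 / (2*(q+2*p)*(3-q-2*p)) := by ring_nf
    rw [hlhs] at this
    linarith [this]

lemma quad_lemma (n : ℕ) (p L s t : ℝ) (hn : (0:ℝ) < n) (hL : 0 < L) (hs : 0 ≤ s)
    (hs2 : L * s^2 = L + 18*n*p*(1-p))
    (hX : (3*n*L*s)^2 < ((9*n+2*L)*t - 3*n*L*(1-2*p))^2) :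
    2*L*(3*n*p+t)*(3*n*(1-p)-t) < 9*n*t^2 := by
  have key : (9*n+2*L) * (9*n*t^2 - 2*L*(3*n*p+t)*(3*n*(1-p)-t))
      = ((9*n+2*L)*t - 3*n*L*(1-2*p))^2 - (3*n*L*s)^2 := by
    linear_combination (9*n^2*L) * hs2
  have h2 : (0:ℝ) < 9*n+2*L := by positivity
  nlinarith [key, hX, h2]

lemma chernoff_sum (n m : ℕ) (p z : ℝ) (hp0 : 0 ≤ p) (hp1 : p ≤ 1) (hz : 1 ≤ z) :
    ∑ i ∈ Finset.Icc m n, (n.choose i : ℝ) * p^i * (1-p)^(n-i) ≤ (1-p+p*z)^n / z^m := by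
  have hz0 : (0:ℝ) < z := lt_of_lt_of_le one_pos hz
  have hb : ∀ i, (0:ℝ) ≤ (n.choose i : ℝ) * p^i * (1-p)^(n-i) := by
    intro i
    have : (0:ℝ) ≤ 1 - p := by linarith
    positivity
  rw [le_div_iff₀ (pow_pos hz0 m)]
  calc (∑ i ∈ Finset.Icc m n, (n.choose i : ℝ) * p^i * (1-p)^(n-i)) * z^m
      = ∑ i ∈ Finset.Icc m n, (n.choose i : ℝ) * p^i * (1-p)^(n-i) * z^m := by
        rw [Finset.sum_mul]
    _ ≤ ∑ i ∈ Finset.Icc m n, (n.choose i : ℝ) * p^i * (1-p)^(n-i) * z^i := by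
        apply Finset.sum_le_sum
        intro i hi
        have hmi : m ≤ i := (Finset.mem_Icc.mp hi).1
        exact mul_le_mul_of_nonneg_left (pow_le_pow_right₀ hz hmi) (hb i)
    _ ≤ ∑ i ∈ Finset.range (n+1), (n.choose i : ℝ) * p^i * (1-p)^(n-i) * z^i := by
        apply Finset.sum_le_sum_of_subset_of_nonneg
        · intro i hi
          rw [Finset.mem_range, Nat.lt_succ_iff]
          exact (Finset.mem_Icc.mp hi).2
        · intro i _ _
          exact mul_nonneg (hb i) (pow_nonneg hz0.le i)
    _ = (1-p+p*z)^n := by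
        rw [add_comm (1-p) (p*z), add_pow]
        apply Finset.sum_congr rfl
        intro i _
        rw [mul_pow]
        ring

lemma upper_tail_lt (n : ℕ) (hn : 0 < n) (p L : ℝ) (hp0 : 0 < p) (hp1 : p < 1)
    (m : ℕ) (hmn : m ≤ n) (hm : (n:ℝ)*p < m)
    (hQ : 2*L*(3*n*p + ((m:ℝ) - n*p))*(3*n*(1-p) - ((m:ℝ) - n*p)) < 9*n*((m:ℝ) - n*p)^2) :
    ∑ i ∈ Finset.Icc m n, (n.choose i : ℝ) * p^i * (1-p)^(n-i) < Real.exp (-L) := by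
  have hn0 : (0:ℝ) < n := Nat.cast_pos.2 hn
  obtain ⟨q, hnq⟩ : ∃ q : ℝ, (m:ℝ) = n*q := ⟨(m:ℝ)/n, by field_simp⟩
  have hmn' : (m:ℝ) ≤ n := Nat.cast_le.2 hmn
  have hq1 : q ≤ 1 := by
    by_contra h
    push_neg at h
    nlinarith
  have hqp : p < q := by nlinarith [hm]
  have hq0 : 0 < q := lt_trans hp0 hqp
  have hd1 : 0 < q + 2*p := by positivity
  have hd2 : 0 < 3 - q - 2*p := by nlinarith
  rw [hnq] at hQ
  -- Step 1 : L < n * kl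
  have step1 : L < (n:ℝ) * (q * Real.log (q/p) + (1-q) * Real.log ((1-q)/(1-p))) := by
    have e1 : 3*(n:ℝ)*p + ((n:ℝ)*q - n*p) = n*(q + 2*p) := by ring
    have e2 : 3*(n:ℝ)*(1-p) - ((n:ℝ)*q - n*p) = n*((1-q) + 2*(1-p)) := by ring
    have hd2' : 0 < (1-q) + 2*(1-p) := by nlinarith
    have hfac : (0:ℝ) < 2*(3*n*p + ((n:ℝ)*q - n*p))*(3*n*(1-p) - ((n:ℝ)*q - n*p)) := by
      rw [e1, e2]; positivity
    have hL1 : L < 9*n*((n:ℝ)*q - n*p)^2 / (2*(3*n*p + ((n:ℝ)*q - n*p))*(3*n*(1-p) - ((n:ℝ)*q - n*p))) := by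
      rw [lt_div_iff₀ hfac]
      nlinarith [hQ]
    have hident : 9*(n:ℝ)*((n:ℝ)*q - n*p)^2 / (2*(3*n*p + ((n:ℝ)*q - n*p))*(3*n*(1-p) - ((n:ℝ)*q - n*p)))
        = (n:ℝ) * (9*(q-p)^2 / (2*(q+2*p)*(3-q-2*p))) := by
      rw [e1, e2]
      have h3 : (3:ℝ) - q - 2*p = (1-q) + 2*(1-p) := by ring
      rw [h3]
      field_simp
    rw [hident] at hL1
    have hkl := kl_ge p q hp0 hp1 hq0.le hq1
    calc L < (n:ℝ) * (9*(q-p)^2 / (2*(q+2*p)*(3-q-2*p))) := hL1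
      _ ≤ (n:ℝ) * (q * Real.log (q/p) + (1-q) * Real.log ((1-q)/(1-p))) :=
          mul_le_mul_of_nonneg_left hkl hn0.le
  -- Step 2 : sum ≤ exp(-(n * kl))
  rcases eq_or_lt_of_le hmn with heq | hlt
  · -- m = n : the sum is p^n
    have hqq : q = 1 := by
      have h1 : (n:ℝ) = n*q := by rw [← hnq, heq]
      have := mul_left_cancel₀ hn0.ne' (by linarith [h1] : (n:ℝ)*1 = n*q)
      linarith
    have hsum : ∑ i ∈ Finset.Icc m n, (n.choose i : ℝ) * p^i * (1-p)^(n-i) = p^n := by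
      rw [heq, Finset.Icc_self, Finset.sum_singleton]
      simp
    rw [hsum]
    have hklval : q * Real.log (q/p) + (1-q) * Real.log ((1-q)/(1-p)) = -Real.log p := by
      rw [hqq]
      simp [Real.log_div one_ne_zero hp0.ne']
    rw [hklval] at step1
    have hpow : p^n = Real.exp ((n:ℝ) * Real.log p) := by
      rw [← Real.log_pow, Real.exp_log (pow_pos hp0 n)]
    rw [hpow]
    apply Real.exp_lt_exp.2
    nlinarith [step1]
  · -- m < n
    have hq1' : q < 1 := by
      have : (m:ℝ) < n := by exact_mod_cast hlt
      nlinarith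
    have h1q : (0:ℝ) < 1 - q := by linarith
    have h1p : (0:ℝ) < 1 - p := by linarith
    set z : ℝ := q*(1-p)/(p*(1-q)) with hz
    have hzpos : 0 < p*(1-q) := by positivity
    have hz1 : 1 ≤ z := by
      rw [hz, le_div_iff₀ hzpos]
      nlinarith
    have hbound := chernoff_sum n m p z hp0.le hp1.le hz1
    have hzval : 1 - p + p*z = (1-p)/(1-q) := by
      rw [hz]; field_simp; ring
    have hexp : (1-p+p*z)^n / z^m = Real.exp (-((n:ℝ) * (q * Real.log (q/p) + (1-q) * Real.log ((1-q)/(1-p))))) := by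
      rw [hzval, hz]
      have hX : (0:ℝ) < (1-p)/(1-q) := by positivity
      have hZ : (0:ℝ) < q*(1-p)/(p*(1-q)) := by positivity
      rw [← Real.exp_log (pow_pos hX n), ← Real.exp_log (pow_pos hZ m), ← Real.exp_sub]
      congr 1
      rw [Real.log_pow, Real.log_pow]
      rw [Real.log_div h1p.ne' h1q.ne', Real.log_div (by positivity : (q*(1-p)) ≠ 0) hzpos.ne',
        Real.log_mul hq0.ne' h1p.ne', Real.log_mul hp0.ne' h1q.ne',
        Real.log_div hq0.ne' hp0.ne', Real.log_div h1q.ne' h1p.ne', hnq]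
      ring
    rw [hexp] at hbound
    calc ∑ i ∈ Finset.Icc m n, (n.choose i : ℝ) * p^i * (1-p)^(n-i)
        ≤ Real.exp (-((n:ℝ) * (q * Real.log (q/p) + (1-q) * Real.log ((1-q)/(1-p))))) := hbound
      _ < Real.exp (-L) := Real.exp_lt_exp.2 (by linarith [step1])

lemma lower_tail_lt (n : ℕ) (hn : 0 < n) (p L : ℝ) (hp0 : 0 < p) (hp1 : p < 1)
    (m : ℕ) (hm : (m:ℝ) < (n:ℝ)*p)
    (hQ : 2*L*(3*n*p + ((m:ℝ) - n*p))*(3*n*(1-p) - ((m:ℝ) - n*p)) < 9*n*((m:ℝ) - n*p)^2) :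
    ∑ i ∈ Finset.range (m+1), (n.choose i : ℝ) * p^i * (1-p)^(n-i) < Real.exp (-L) := by
  have hn0 : (0:ℝ) < n := Nat.cast_pos.2 hn
  have hmn : m < n := by
    by_contra h
    push_neg at h
    have : (n:ℝ) ≤ m := Nat.cast_le.2 h
    nlinarith
  -- reflect the sum
  have hrefl : ∑ i ∈ Finset.range (m+1), (n.choose i : ℝ) * p^i * (1-p)^(n-i)
      = ∑ j ∈ Finset.Icc (n-m) n, (n.choose j : ℝ) * (1-p)^j * (1-(1-p))^(n-j) := by
    rw [show (1:ℝ) - (1-p) = p by ring]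
    apply Finset.sum_nbij' (fun i => n - i) (fun j => n - j)
    · intro i hi
      rw [Finset.mem_range, Nat.lt_succ_iff] at hi
      rw [Finset.mem_Icc]
      omega
    · intro j hj
      rw [Finset.mem_Icc] at hj
      rw [Finset.mem_range, Nat.lt_succ_iff]
      omega
    · intro i hi
      rw [Finset.mem_range, Nat.lt_succ_iff] at hi
      omega
    · intro j hj
      rw [Finset.mem_Icc] at hj
      omega
    · intro i hi
      rw [Finset.mem_range, Nat.lt_succ_iff] at hi
      have hin : i ≤ n := le_trans hi hmn.le
      rw [Nat.choose_symm hin]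
      rw [show n - (n - i) = i by omega]
      ring
  rw [hrefl]
  apply upper_tail_lt n hn (1-p) L (by linarith) (by linarith) (n-m) (by omega)
  · have hc : ((n-m : ℕ):ℝ) = (n:ℝ) - m := by
      rw [Nat.cast_sub hmn.le]
    rw [hc]
    nlinarith
  · have hc : ((n-m : ℕ):ℝ) = (n:ℝ) - m := by
      rw [Nat.cast_sub hmn.le]
    rw [hc]
    nlinarith [hQ]

open MeasureTheory ProbabilityTheory

set_option maxHeartbeats 2000000 in
/-- **Theorem 3.** Let `K` be a binomial random variable, `Pr{K = i} = C(n,i) pⁱ (1-p)^{n-i}`,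
with `p ∈ (0,1)` and `n` a positive integer.  For arbitrary reals `a, b` and `η ∈ (0,1)`, with
`Tlo = max {a, ⌈np + (1 - 2p - √(1 + 18np(1-p)/ln(2/η))) / (2/(3n) + 3/ln(2/η))⌉}` and
`Thi = min {b, ⌊np + (1 - 2p + √(1 + 18np(1-p)/ln(2/η))) / (2/(3n) + 3/ln(2/η))⌋}`,
we have `Pr{Tlo ≤ K ≤ Thi} ≤ Pr{a ≤ K ≤ b} < Pr{Tlo ≤ K ≤ Thi} + η`. -/
theorem binomial_truncation {Ω : Type*} [MeasureSpace Ω] [IsProbabilityMeasure (ℙ : Measure Ω)]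
    (n : ℕ) (hn : 0 < n) (p : ℝ) (hp0 : 0 < p) (hp1 : p < 1)
    (K : Ω → ℕ) (hK : Measurable K)
    (hbin : ∀ i : ℕ, (ℙ {ω | K ω = i}).toReal = n.choose i * p ^ i * (1 - p) ^ (n - i))
    (a b η : ℝ) (hη0 : 0 < η) (hη1 : η < 1)
    (Tlo Thi : ℝ)
    (hTlo : Tlo = max a
      ((⌈(n : ℝ) * p + (1 - 2 * p - Real.sqrt (1 + 18 * n * p * (1 - p) / Real.log (2 / η))) /
          (2 / (3 * n) + 3 / Real.log (2 / η))⌉ : ℤ) : ℝ))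
    (hThi : Thi = min b
      ((⌊(n : ℝ) * p + (1 - 2 * p + Real.sqrt (1 + 18 * n * p * (1 - p) / Real.log (2 / η))) /
          (2 / (3 * n) + 3 / Real.log (2 / η))⌋ : ℤ) : ℝ)) :
    (ℙ {ω | Tlo ≤ (K ω : ℝ) ∧ (K ω : ℝ) ≤ Thi}).toReal ≤
        (ℙ {ω | a ≤ (K ω : ℝ) ∧ (K ω : ℝ) ≤ b}).toReal ∧
      (ℙ {ω | a ≤ (K ω : ℝ) ∧ (K ω : ℝ) ≤ b}).toReal <
        (ℙ {ω | Tlo ≤ (K ω : ℝ) ∧ (K ω : ℝ) ≤ Thi}).toReal + η := by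
  have hn0 : (0:ℝ) < n := Nat.cast_pos.2 hn
  have h1p : (0:ℝ) < 1 - p := by linarith
  set L := Real.log (2 / η) with hLdef
  have hL : 0 < L := Real.log_pos (by rw [lt_div_iff₀ hη0]; linarith)
  set s := Real.sqrt (1 + 18 * n * p * (1 - p) / L) with hsdef
  have hs0 : 0 ≤ s := Real.sqrt_nonneg _
  have harg : (0:ℝ) ≤ 18 * n * p * (1 - p) / L :=
    div_nonneg (mul_nonneg (by positivity) h1p.le) hL.le
  have hs1 : 1 ≤ s := by
    rw [hsdef]
    have h1 := Real.sqrt_le_sqrt (by linarith : (1:ℝ) ≤ 1 + 18 * n * p * (1 - p) / L)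
    simpa using h1
  have hs2 : L * s^2 = L + 18*n*p*(1-p) := by
    rw [hsdef, Real.sq_sqrt (by linarith : (0:ℝ) ≤ 1 + 18 * n * p * (1 - p) / L)]
    field_simp
  set D := 2 / (3 * (n:ℝ)) + 3 / L with hDdef
  have hD : 0 < D := by
    rw [hDdef]
    have h1 : 0 < 2/(3*(n:ℝ)) := by positivity
    have h2 : 0 < 3/L := div_pos (by norm_num) hL
    linarith
  set rminus := (n : ℝ) * p + (1 - 2 * p - s) / D with hrminusdef
  set rplus := (n : ℝ) * p + (1 - 2 * p + s) / D with hrplusdef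
  set tl := ⌈rminus⌉ with htldef
  set th := ⌊rplus⌋ with hthdef
  have hcplus : 0 < (1 - 2*p + s) / D := div_pos (by linarith) hD
  have hcminus : (1 - 2*p - s) / D < 0 := div_neg_of_neg_of_pos (by linarith) hD
  have hrplus_np : (n:ℝ)*p < rplus := by rw [hrplusdef]; linarith
  have hrminus_np : rminus < (n:ℝ)*p := by rw [hrminusdef]; linarith
  have hkey_plus : (9*(n:ℝ)+2*L) * ((1 - 2*p + s) / D) = 3*n*L*(1-2*p) + 3*n*L*s := by
    rw [hDdef]; field_simp; ring
  have hkey_minus : (9*(n:ℝ)+2*L) * ((1 - 2*p - s) / D) = 3*n*L*(1-2*p) - 3*n*L*s := by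
    rw [hDdef]; field_simp; ring
  have hA : (0:ℝ) < 9*n+2*L := by positivity
  have hexpL : Real.exp (-L) = η/2 := by
    rw [hLdef, ← Real.log_inv, Real.exp_log (inv_pos.2 (div_pos two_pos hη0))]
    rw [inv_div]
  clear_value L s D rminus rplus tl th
  -- measure-theoretic bookkeeping
  have hfin : ∀ (A : Set Ω), ℙ A ≠ ⊤ := fun A => measure_ne_top ℙ A
  have hzero : ∀ j, n < j → ℙ {ω | K ω = j} = 0 := by
    intro j hj
    have h := hbin j
    rw [Nat.choose_eq_zero_of_lt hj] at h
    norm_num at h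
    exact ((ENNReal.toReal_eq_zero_iff _).mp h).resolve_right (hfin _)
  have htail : ℙ {ω | n < K ω} = 0 := by
    have hsub : {ω | n < K ω} ⊆ ⋃ j : ℕ, {ω | K ω = n + 1 + j} := by
      intro ω hω
      simp only [Set.mem_iUnion, Set.mem_setOf_eq]
      exact ⟨K ω - (n+1), by simp only [Set.mem_setOf_eq] at hω; omega⟩
    exact measure_mono_null hsub (measure_iUnion_null fun j => hzero _ (by omega))
  have hub : ∀ m : ℕ, (ℙ {ω | m ≤ K ω}).toReal ≤
      ∑ i ∈ Finset.Icc m n, (n.choose i:ℝ)*p^i*(1-p)^(n-i) := by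
    intro m
    have hsub : {ω | m ≤ K ω} ⊆ (⋃ i ∈ Finset.Icc m n, {ω | K ω = i}) ∪ {ω | n < K ω} := by
      intro ω hω
      simp only [Set.mem_setOf_eq] at hω
      rcases le_or_gt (K ω) n with h|h
      · left
        simp only [Set.mem_iUnion, Set.mem_setOf_eq]
        exact ⟨K ω, Finset.mem_Icc.2 ⟨hω, h⟩, rfl⟩
      · right; exact h
    have h1 : ℙ {ω | m ≤ K ω} ≤ ∑ i ∈ Finset.Icc m n, ℙ {ω | K ω = i} := by
      calc ℙ {ω | m ≤ K ω}
          ≤ ℙ ((⋃ i ∈ Finset.Icc m n, {ω | K ω = i}) ∪ {ω | n < K ω}) := measure_mono hsub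
        _ ≤ ℙ (⋃ i ∈ Finset.Icc m n, {ω | K ω = i}) + ℙ {ω | n < K ω} := measure_union_le _ _
        _ = ℙ (⋃ i ∈ Finset.Icc m n, {ω | K ω = i}) := by rw [htail, add_zero]
        _ ≤ ∑ i ∈ Finset.Icc m n, ℙ {ω | K ω = i} := measure_biUnion_finset_le _ _
    calc (ℙ {ω | m ≤ K ω}).toReal
        ≤ (∑ i ∈ Finset.Icc m n, ℙ {ω | K ω = i}).toReal := by
          apply ENNReal.toReal_mono _ h1
          exact (ENNReal.sum_lt_top.2 fun i _ => (hfin _).lt_top).ne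
      _ = ∑ i ∈ Finset.Icc m n, (ℙ {ω | K ω = i}).toReal :=
          ENNReal.toReal_sum (fun i _ => hfin _)
      _ = ∑ i ∈ Finset.Icc m n, (n.choose i:ℝ)*p^i*(1-p)^(n-i) :=
          Finset.sum_congr rfl (fun i _ => hbin i)
  have hlb : ∀ m : ℕ, (ℙ {ω | K ω ≤ m}).toReal ≤
      ∑ i ∈ Finset.range (m+1), (n.choose i:ℝ)*p^i*(1-p)^(n-i) := by
    intro m
    have hsub : {ω | K ω ≤ m} ⊆ ⋃ i ∈ Finset.range (m+1), {ω | K ω = i} := by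
      intro ω hω
      simp only [Set.mem_setOf_eq] at hω
      simp only [Set.mem_iUnion, Set.mem_setOf_eq]
      exact ⟨K ω, Finset.mem_range.2 (by omega), rfl⟩
    have h1 : ℙ {ω | K ω ≤ m} ≤ ∑ i ∈ Finset.range (m+1), ℙ {ω | K ω = i} :=
      le_trans (measure_mono hsub) (measure_biUnion_finset_le _ _)
    calc (ℙ {ω | K ω ≤ m}).toReal
        ≤ (∑ i ∈ Finset.range (m+1), ℙ {ω | K ω = i}).toReal := by
          apply ENNReal.toReal_mono _ h1
          exact (ENNReal.sum_lt_top.2 fun i _ => (hfin _).lt_top).ne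
      _ = ∑ i ∈ Finset.range (m+1), (ℙ {ω | K ω = i}).toReal :=
          ENNReal.toReal_sum (fun i _ => hfin _)
      _ = ∑ i ∈ Finset.range (m+1), (n.choose i:ℝ)*p^i*(1-p)^(n-i) :=
          Finset.sum_congr rfl (fun i _ => hbin i)
  -- tail events
  set U1 : Set Ω := {ω | ((th:ℝ)) < (K ω : ℝ)} with hU1def
  set U2 : Set Ω := {ω | (K ω : ℝ) < ((tl:ℝ))} with hU2def
  clear_value U1 U2
  have hth0 : 0 ≤ th := by
    rw [hthdef]
    apply Int.le_floor.2
    push_cast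
    nlinarith [hrplus_np, mul_pos hn0 hp0]
  -- upper tail bound
  have hU1bound : (ℙ U1).toReal < η/2 := by
    set m : ℕ := th.toNat + 1 with hmdef
    clear_value m
    have hmcast : ((m:ℕ):ℝ) = (th:ℝ) + 1 := by
      have h1 : ((th.toNat:ℕ):ℝ) = (th:ℝ) := by exact_mod_cast Int.toNat_of_nonneg hth0
      rw [hmdef]
      push_cast
      rw [h1]
    have hU1eq : U1 = {ω | m ≤ K ω} := by
      ext ω
      simp only [hU1def, Set.mem_setOf_eq]
      constructor
      · intro h
        have h' : th < (K ω : ℤ) := by exact_mod_cast h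
        omega
      · intro h
        have h' : (m:ℝ) ≤ (K ω : ℝ) := by exact_mod_cast h
        rw [hmcast] at h'
        linarith
    have hm_gt : rplus < (m:ℝ) := by
      rw [hmcast, hthdef]
      exact Int.lt_floor_add_one rplus
    have hm_np : (n:ℝ)*p < m := lt_trans hrplus_np hm_gt
    rcases le_or_gt m n with hc|hc
    · -- use the Chernoff bound
      have ht_gt : (1 - 2*p + s)/D < (m:ℝ) - n*p := by
        rw [hrplusdef] at hm_gt; linarith
      have hXgt : 3*(n:ℝ)*L*s < (9*n+2*L)*((m:ℝ) - n*p) - 3*n*L*(1-2*p) := by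
        have := mul_lt_mul_of_pos_left ht_gt hA
        rw [hkey_plus] at this
        linarith
      have hX : (3*(n:ℝ)*L*s)^2 < ((9*n+2*L)*((m:ℝ) - n*p) - 3*n*L*(1-2*p))^2 := by
        have h0 : (0:ℝ) ≤ 3*(n:ℝ)*L*s :=
          mul_nonneg (mul_nonneg (mul_nonneg (by norm_num) hn0.le) hL.le) hs0
        exact pow_lt_pow_left₀ hXgt h0 (by norm_num)
      have hQ := quad_lemma n p L s ((m:ℝ) - n*p) hn0 hL hs0 hs2 hX
      have hsum := upper_tail_lt n hn p L hp0 hp1 m hc hm_np hQ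
      rw [hU1eq]
      calc (ℙ {ω | m ≤ K ω}).toReal ≤ _ := hub m
        _ < Real.exp (-L) := hsum
        _ = η/2 := hexpL
    · -- tail beyond n is null
      have hnull : ℙ U1 = 0 := by
        apply measure_mono_null _ htail
        rw [hU1eq]
        intro ω hω
        simp only [Set.mem_setOf_eq] at hω ⊢
        omega
      rw [hnull]
      simp
      linarith
  -- lower tail bound
  have hU2bound : (ℙ U2).toReal < η/2 := by
    rcases le_or_gt tl 0 with hc|hc
    · have hempty : U2 = ∅ := by
        ext ω
        simp only [hU2def, Set.mem_setOf_eq, Set.mem_empty_iff_false, iff_false, not_lt]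
        have h1 : ((tl:ℝ)) ≤ 0 := by exact_mod_cast hc
        have h2 : (0:ℝ) ≤ (K ω : ℝ) := Nat.cast_nonneg _
        linarith
      rw [hempty]
      simp
      linarith
    · set m : ℕ := (tl - 1).toNat with hmdef
      clear_value m
      have hmcast : ((m:ℕ):ℝ) = (tl:ℝ) - 1 := by
        have h1 : (((tl-1).toNat:ℕ):ℝ) = ((tl - 1 : ℤ):ℝ) := by
          exact_mod_cast Int.toNat_of_nonneg (by omega : (0:ℤ) ≤ tl - 1)
        rw [hmdef, h1]
        push_cast
        ring
      have hU2eq : U2 = {ω | K ω ≤ m} := by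
        ext ω
        simp only [hU2def, Set.mem_setOf_eq]
        constructor
        · intro h
          have h' : (K ω : ℤ) < tl := by exact_mod_cast h
          omega
        · intro h
          have h' : (K ω : ℝ) ≤ (m:ℝ) := by exact_mod_cast h
          rw [hmcast] at h'
          have htlr : ((tl:ℝ)) - 1 < (tl:ℝ) := by linarith
          linarith
      have hm_lt : (m:ℝ) < rminus := by
        rw [hmcast]
        have := Int.ceil_lt_add_one rminus
        rw [← htldef] at this
        linarith
      have hm_np : (m:ℝ) < (n:ℝ)*p := lt_trans hm_lt hrminus_np
      have ht_lt : (m:ℝ) - n*p < (1 - 2*p - s)/D := by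
        rw [hrminusdef] at hm_lt; linarith
      have hXlt : (9*n+2*L)*((m:ℝ) - n*p) - 3*n*L*(1-2*p) < -(3*(n:ℝ)*L*s) := by
        have := mul_lt_mul_of_pos_left ht_lt hA
        rw [hkey_minus] at this
        linarith
      have hX : (3*(n:ℝ)*L*s)^2 < ((9*n+2*L)*((m:ℝ) - n*p) - 3*n*L*(1-2*p))^2 := by
        have h0 : (0:ℝ) ≤ 3*(n:ℝ)*L*s :=
          mul_nonneg (mul_nonneg (mul_nonneg (by norm_num) hn0.le) hL.le) hs0
        have h1 : 0 < -((9*(n:ℝ)+2*L)*((m:ℝ) - n*p) - 3*n*L*(1-2*p)) - 3*(n:ℝ)*L*s := by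
          linarith
        nlinarith [mul_pos h1 (by linarith : (0:ℝ) < -((9*(n:ℝ)+2*L)*((m:ℝ) - n*p) - 3*n*L*(1-2*p)) + 3*(n:ℝ)*L*s)]
      have hQ := quad_lemma n p L s ((m:ℝ) - n*p) hn0 hL hs0 hs2 hX
      have hsum := lower_tail_lt n hn p L hp0 hp1 m hm_np hQ
      rw [hU2eq]
      calc (ℙ {ω | K ω ≤ m}).toReal ≤ _ := hlb m
        _ < Real.exp (-L) := hsum
        _ = η/2 := hexpL
  -- event inclusions
  set S : Set Ω := {ω | a ≤ (K ω : ℝ) ∧ (K ω : ℝ) ≤ b} with hSdef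
  set T : Set Ω := {ω | Tlo ≤ (K ω : ℝ) ∧ (K ω : ℝ) ≤ Thi} with hTdef
  have hTsubS : T ⊆ S := by
    intro ω hω
    obtain ⟨h1, h2⟩ := hω
    constructor
    · calc a ≤ Tlo := by rw [hTlo]; exact le_max_left _ _
        _ ≤ (K ω : ℝ) := h1
    · calc (K ω : ℝ) ≤ Thi := h2
        _ ≤ b := by rw [hThi]; exact min_le_left _ _
  have hsplit : S ⊆ T ∪ (U2 ∪ U1) := by
    intro ω hω
    obtain ⟨ha, hb⟩ := hω
    by_cases h1 : Tlo ≤ (K ω : ℝ)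
    · by_cases h2 : (K ω : ℝ) ≤ Thi
      · left; exact ⟨h1, h2⟩
      · right; right
        push_neg at h2
        rw [hThi] at h2
        rcases min_lt_iff.1 h2 with h|h
        · linarith
        · rw [hU1def]; exact h
    · right; left
      push_neg at h1
      rw [hTlo] at h1
      rcases lt_max_iff.1 h1 with h|h
      · linarith
      · rw [hU2def]; exact h
  constructor
  · exact ENNReal.toReal_mono (hfin S) (measure_mono hTsubS)
  · have hPS : (ℙ S).toReal ≤ (ℙ T).toReal + ((ℙ U2).toReal + (ℙ U1).toReal) := by
      have h1 : ℙ S ≤ ℙ T + (ℙ U2 + ℙ U1) := by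
        calc ℙ S ≤ ℙ (T ∪ (U2 ∪ U1)) := measure_mono hsplit
          _ ≤ ℙ T + ℙ (U2 ∪ U1) := measure_union_le _ _
          _ ≤ ℙ T + (ℙ U2 + ℙ U1) := add_le_add le_rfl (measure_union_le _ _)
      have h2 := ENNReal.toReal_mono (by
        exact (ENNReal.add_ne_top.2 ⟨hfin T, ENNReal.add_ne_top.2 ⟨hfin U2, hfin U1⟩⟩)) h1
      rwa [ENNReal.toReal_add (hfin T) (ENNReal.add_ne_top.2 ⟨hfin U2, hfin U1⟩),
        ENNReal.toReal_add (hfin U2) (hfin U1)] at h2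
    linarith
end

section
/- Let K be a binomial random variable with parameters n (a positive integer) and p ∈ (0, 1), and let η ∈ (0, 1). Define z₁ = p + (1 − 2p − √(1 + 18np(1 − p)/ln(2/η))) / (2/3 + 3n/ln(2/η)) and z₂ = p + (1 − 2p + √(1 + 18np(1 − p)/ln(2/η))) / (2/3 + 3n/ln(2/η)). Then Pr{K ≤ n·z₁} < η/2 and Pr{K ≥ n·z₂} < η/2. -/
open MeasureTheory ProbabilityTheory Finset intervalIntegral

def bpmf (n : ℕ) (p : ℝ) (i : ℕ) : ℝ := (n.choose i : ℝ) * p^i * (1-p)^(n-i)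

lemma one_lt_of_sq {S : ℝ} (h0 : 0 ≤ S) (h2 : 1 < S^2) : 1 < S := by nlinarith

lemma prod_pos_of_eq {L x y c : ℝ} (hL : 0 < L) (hc : 0 < c) (h : c = 2*L*x*y) : 0 < x*y := by
  nlinarith

lemma unit_interval_of_mul_pos {a : ℝ} (h : 0 < a*(1-a)) : 0 < a ∧ a < 1 := by
  have h1 : 0 < a := by nlinarith [sq_nonneg a]
  exact ⟨h1, by nlinarith⟩


-- tangent line inequality for h(t) = 1/(t(1-t))
lemma tangent_ineq {t a : ℝ} (ht0 : 0 < t) (ht1 : t < 1) (ha0 : 0 < a) (ha1 : a < 1) :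
    1/(a*(1-a)) + (2*a-1)/(a^2*(1-a)^2) * (t-a) ≤ 1/(t*(1-t)) := by
  have h1 : 1/a - (t-a)/a^2 ≤ 1/t := by
    have key : 1/t - (1/a - (t-a)/a^2) = (t-a)^2/(t*a^2) := by
      field_simp; ring
    have : 0 ≤ (t-a)^2/(t*a^2) := by positivity
    linarith
  have h2 : 1/(1-a) + (t-a)/(1-a)^2 ≤ 1/(1-t) := by
    have key : 1/(1-t) - (1/(1-a) + (t-a)/(1-a)^2) = (t-a)^2/((1-t)*(1-a)^2) := by
      have : (1:ℝ) - t ≠ 0 := by linarith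
      have : (1:ℝ) - a ≠ 0 := by linarith
      field_simp; ring
    have h1t : (0:ℝ) < 1 - t := by linarith
    have h1a : (0:ℝ) < 1 - a := by linarith
    have : 0 ≤ (t-a)^2/((1-t)*(1-a)^2) := by positivity
    linarith
  have e1 : 1/(t*(1-t)) = 1/t + 1/(1-t) := by
    have : (1:ℝ) - t ≠ 0 := by linarith
    field_simp
    ring
  have e2 : 1/(a*(1-a)) + (2*a-1)/(a^2*(1-a)^2) * (t-a)
      = (1/a - (t-a)/a^2) + (1/(1-a) + (t-a)/(1-a)^2) := by
    have : (1:ℝ) - a ≠ 0 := by linarith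
    field_simp; ring
  rw [e1, e2]; linarith

set_option maxHeartbeats 2000000 in
lemma kl_ge_quad {p q : ℝ} (hp0 : 0 < p) (hp1 : p < 1) (hq0 : 0 < q) (hq1 : q < 1) :
    (q-p)^2 / (2 * ((2*p+q)/3) * (1 - (2*p+q)/3)) ≤
      q * Real.log (q/p) + (1-q) * Real.log ((1-q)/(1-p)) := by
  set a : ℝ := (2*p+q)/3 with ha
  have ha0 : 0 < a := by rw [ha]; linarith
  have ha1 : a < 1 := by rw [ha]; linarith
  set c₀ : ℝ := 1/(a*(1-a)) with hc₀
  set c₁ : ℝ := (2*a-1)/(a^2*(1-a)^2) with hc₁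
  set f : ℝ → ℝ := fun t => (q-t)/(t*(1-t)) with hf
  set g : ℝ → ℝ := fun t => (q-t)*(c₀ + c₁*(t-a)) with hg
  set Φ : ℝ → ℝ := fun t => q*Real.log t + (1-q)*Real.log (1-t) with hΦ
  set G : ℝ → ℝ := fun t => c₀*(q*t - t^2/2) + c₁*(q*t^2/2 - q*a*t - t^3/3 + a*t^2/2) with hG
  -- membership in (0,1) for points of uIcc
  have hmem : ∀ t ∈ Set.uIcc p q, 0 < t ∧ t < 1 := by
    intro t ht
    rcases Set.mem_uIcc.mp ht with h | h
    · exact ⟨lt_of_lt_of_le hp0 h.1, lt_of_le_of_lt h.2 hq1⟩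
    · exact ⟨lt_of_lt_of_le hq0 h.1, lt_of_le_of_lt h.2 hp1⟩
  have hΦderiv : ∀ t ∈ Set.uIcc p q, HasDerivAt Φ (f t) t := by
    intro t ht
    obtain ⟨ht0, ht1⟩ := hmem t ht
    have h1 : HasDerivAt (fun x : ℝ => q * Real.log x) (q * t⁻¹) t :=
      (Real.hasDerivAt_log ht0.ne').const_mul q
    have hsub : HasDerivAt (fun x : ℝ => 1 - x) (-1) t := (hasDerivAt_id t).const_sub 1
    have h2' : HasDerivAt (fun x : ℝ => Real.log (1 - x)) ((1-t)⁻¹ * (-1)) t :=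
      (Real.hasDerivAt_log (by linarith : (1:ℝ) - t ≠ 0)).comp t hsub
    have h2 : HasDerivAt (fun x : ℝ => (1-q) * Real.log (1 - x)) ((1-q) * ((1-t)⁻¹ * (-1))) t :=
      h2'.const_mul (1-q)
    have := h1.add h2
    refine this.congr_deriv ?_
    rw [hf]
    have ht1' : (1:ℝ) - t ≠ 0 := by linarith
    field_simp
    ring
  have hGderiv : ∀ t : ℝ, HasDerivAt G (g t) t := by
    intro t
    have hid := hasDerivAt_id t
    have h2 : HasDerivAt (fun x : ℝ => x^2) (2*t) t := by simpa using hasDerivAt_pow 2 t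
    have h3 : HasDerivAt (fun x : ℝ => x^3) (3*t^2) t := by simpa using hasDerivAt_pow 3 t
    have hA := ((hid.const_mul q).sub (h2.div_const 2)).const_mul c₀
    have hB := (((((h2.const_mul q).div_const 2).sub (hid.const_mul (q*a))).sub
          (h3.div_const 3)).add ((h2.const_mul a).div_const 2)).const_mul c₁
    have hAB := hA.add hB
    refine hAB.congr_deriv ?_
    rw [hg]; ring
  have hfint : IntervalIntegrable f volume p q := by
    apply ContinuousOn.intervalIntegrable
    apply ContinuousOn.div
    · fun_prop
    · fun_prop
    · intro t ht
      obtain ⟨ht0, ht1⟩ := hmem t ht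
      have : (0:ℝ) < t * (1-t) := mul_pos ht0 (by linarith)
      exact this.ne'
  have hgint : IntervalIntegrable g volume p q :=
    (Continuous.continuousOn (by fun_prop)).intervalIntegrable
  have hIf : ∫ t in p..q, f t = Φ q - Φ p :=
    intervalIntegral.integral_eq_sub_of_hasDerivAt hΦderiv hfint
  have hIg : ∫ t in p..q, g t = G q - G p :=
    intervalIntegral.integral_eq_sub_of_hasDerivAt (fun t _ => hGderiv t) hgint
  have hΦkl : Φ q - Φ p = q * Real.log (q/p) + (1-q) * Real.log ((1-q)/(1-p)) := by
    rw [hΦ]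
    rw [Real.log_div hq0.ne' hp0.ne', Real.log_div (by linarith : (1:ℝ)-q ≠ 0) (by linarith : (1:ℝ)-p ≠ 0)]
    ring
  have hGval : G q - G p = (q-p)^2 / (2 * a * (1-a)) := by
    have hq : q = 3*a - 2*p := by rw [ha]; ring
    rw [hG, hc₀, hc₁]
    beta_reduce
    rw [hq]
    have h1 : a ≠ 0 := ha0.ne'
    have h2 : 1 - a ≠ 0 := by linarith
    field_simp
    ring
  have hcomp : ∀ t, 0 < t → t < 1 → g t ≤ f t ∨ True := fun _ _ _ => Or.inr trivial
  -- pointwise tangent comparison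
  have htan : ∀ t, 0 < t → t < 1 → c₀ + c₁*(t-a) ≤ 1/(t*(1-t)) := by
    intro t ht0 ht1
    have := tangent_ineq ht0 ht1 ha0 ha1
    rw [hc₀, hc₁]; linarith
  rcases le_or_gt p q with hpq | hpq
  · have hmono : ∫ t in p..q, g t ≤ ∫ t in p..q, f t := by
      apply intervalIntegral.integral_mono_on hpq hgint hfint
      intro t ht
      have ht' : t ∈ Set.uIcc p q := Set.mem_uIcc.mpr (Or.inl ht)
      obtain ⟨ht0, ht1⟩ := hmem t ht'
      have hqt : 0 ≤ q - t := by linarith [ht.2]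
      have := htan t ht0 ht1
      have hfe : f t = (q-t) * (1/(t*(1-t))) := by rw [hf]; field_simp
      rw [hfe, hg]
      exact mul_le_mul_of_nonneg_left this hqt
    rw [hIf, hIg, hΦkl, hGval] at *
    linarith [hmono]
  · have hswap_f : ∫ t in q..p, f t = Φ p - Φ q :=
      intervalIntegral.integral_eq_sub_of_hasDerivAt
        (fun t ht => hΦderiv t (by rwa [Set.uIcc_comm])) hfint.symm
    have hswap_g : ∫ t in q..p, g t = G p - G q :=
      intervalIntegral.integral_eq_sub_of_hasDerivAt (fun t _ => hGderiv t) hgint.symm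
    have hmono : ∫ t in q..p, f t ≤ ∫ t in q..p, g t := by
      apply intervalIntegral.integral_mono_on (le_of_lt hpq) hfint.symm hgint.symm
      intro t ht
      have ht' : t ∈ Set.uIcc p q := Set.mem_uIcc.mpr (Or.inr ht)
      obtain ⟨ht0, ht1⟩ := hmem t ht'
      have hqt : q - t ≤ 0 := by linarith [ht.1]
      have := htan t ht0 ht1
      have hfe : f t = (q-t) * (1/(t*(1-t))) := by rw [hf]; field_simp
      rw [hfe, hg]
      exact mul_le_mul_of_nonpos_left this hqt
    rw [hswap_f, hswap_g] at hmono
    rw [← hΦkl, ← hGval]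
    linarith

lemma endpoint_ineq {x : ℝ} (h0 : 0 < x) (h1 : x < 1) :
    9*x/(4*(3-2*x)) < -Real.log (1-x) := by
  have hx0 : (0:ℝ) < 1 - x := by linarith
  set s : ℝ := (1-x) ^ ((1:ℝ)/4) with hs
  have hs0 : 0 < s := Real.rpow_pos_of_pos hx0 _
  have hs1 : s < 1 := by
    apply Real.rpow_lt_one (le_of_lt hx0) (by linarith) (by norm_num)
  have hs4 : s ^ (4:ℕ) = 1 - x := by
    rw [hs, ← Real.rpow_natCast ((1-x) ^ ((1:ℝ)/4)) 4, ← Real.rpow_mul (le_of_lt hx0)]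
    norm_num
  have hlog : Real.log (1-x) = 4 * Real.log s := by
    rw [hs, Real.log_rpow hx0]; ring
  have htang : Real.log s ≤ s - 1 := Real.log_le_sub_one_of_pos hs0
  have hpoly : 9*x/(4*(3-2*x)) < 4*(1-s) := by
    rw [div_lt_iff₀ (by linarith : (0:ℝ) < 4*(3-2*x))]
    have hx : x = 1 - s^(4:ℕ) := by linarith [hs4]
    rw [hx]
    nlinarith [sq_nonneg (8*s^2 - 4*s - 3), sq_nonneg (s - 1), sq_nonneg (s^2 - s),
      mul_pos hs0 hs0, sq_nonneg (s^2 + s - 1), mul_pos (mul_pos hs0 hs0) hs0,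
      sq_nonneg (2*s^2 - s - 1), sq_nonneg (4*s^2 - 3*s), sq_nonneg (4*s^2 - 3),
      mul_pos (mul_pos hs0 hs0) (mul_pos hs0 hs0), hs1, hs0]
  calc 9*x/(4*(3-2*x)) < 4*(1-s) := hpoly
    _ ≤ -(4 * Real.log s) := by linarith
    _ = -Real.log (1-x) := by rw [hlog]

lemma root_identity {nn p L ε S z : ℝ} (hnn : 0 ≤ nn) (hL : 0 < L) (hε : ε^2 = 1)
    (hS2 : S^2 = 1 + 18*nn*p*(1-p)/L)
    (hz : z = p + (1 - 2*p + ε*S)/(2/3 + 3*nn/L)) :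
    nn*(p-z)^2 = 2*L*((2*p+z)/3)*(1-(2*p+z)/3) := by
  have hD : (0:ℝ) < 2/3 + 3*nn/L := by positivity
  set w : ℝ := z - p with hw
  have hDw : (2/3 + 3*nn/L)*w = 1 - 2*p + ε*S := by
    rw [hw, hz]; field_simp; ring
  have h1 : ((2/3 + 3*nn/L)*w - (1-2*p))^2 = 1 + 18*nn*p*(1-p)/L := by
    rw [hDw, show (1 - 2*p + ε*S - (1-2*p)) = ε*S from by ring, mul_pow, hε, one_mul, hS2]
  have key : 3*(2/3+3*nn/L)*(nn*w^2 - 2*L*(p+w/3)*(1-p-w/3)) =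
      L*(((2/3+3*nn/L)*w-(1-2*p))^2 - (1+18*nn*p*(1-p)/L)) := by
    field_simp
    ring
  rw [h1] at key
  simp only [sub_self, mul_zero] at key
  have h3 : nn*w^2 - 2*L*(p+w/3)*(1-p-w/3) = 0 := by
    have := mul_eq_zero.mp key
    rcases this with h | h
    · exact absurd h (by positivity)
    · exact h
  have hz' : z = p + w := by rw [hw]; ring
  rw [hz']
  linear_combination h3



section Prob
variable {Ω : Type*} [MeasureSpace Ω] [IsProbabilityMeasure (ℙ : Measure Ω)]
  {n : ℕ} {p : ℝ} {K : Ω → ℕ}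

lemma null_gt (hbin : ∀ i : ℕ, (ℙ {ω | K ω = i}).toReal = n.choose i * p ^ i * (1 - p) ^ (n - i)) :
    ℙ {ω | n < K ω} = 0 := by
  have hnull : ∀ j : ℕ, n < j → ℙ {ω | K ω = j} = 0 := by
    intro j hj
    have h := hbin j
    rw [Nat.choose_eq_zero_of_lt hj] at h
    norm_num at h
    rcases (ENNReal.toReal_eq_zero_iff _).mp h with h' | h'
    · exact h'
    · exact absurd h' (measure_ne_top _ _)
  have hsub : {ω | n < K ω} ⊆ ⋃ i : ℕ, {ω | K ω = n + 1 + i} := by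
    intro ω hω
    simp only [Set.mem_setOf_eq] at hω
    exact Set.mem_iUnion.mpr ⟨K ω - (n+1), by simp only [Set.mem_setOf_eq]; omega⟩
  refine le_antisymm ?_ (by positivity)
  calc ℙ {ω | n < K ω} ≤ ℙ (⋃ i : ℕ, {ω | K ω = n + 1 + i}) := measure_mono hsub
    _ ≤ ∑' i, ℙ {ω | K ω = n+1+i} := measure_iUnion_le _
    _ = 0 := by
        have h0 : ∀ i : ℕ, ℙ {ω | K ω = n+1+i} = 0 := fun i => hnull _ (by omega)
        simp [h0]

lemma tail_le (hbin : ∀ i : ℕ, (ℙ {ω | K ω = i}).toReal = n.choose i * p ^ i * (1 - p) ^ (n - i))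
    (T : Finset ℕ) (S : Set Ω)
    (hsub : S ⊆ (⋃ i ∈ T, {ω | K ω = i}) ∪ {ω | n < K ω}) :
    (ℙ S).toReal ≤ ∑ i ∈ T, bpmf n p i := by
  have h1 : ℙ S ≤ ∑ i ∈ T, ℙ {ω | K ω = i} := by
    calc ℙ S ≤ ℙ ((⋃ i ∈ T, {ω | K ω = i}) ∪ {ω | n < K ω}) := measure_mono hsub
      _ ≤ ℙ (⋃ i ∈ T, {ω | K ω = i}) + ℙ {ω | n < K ω} := measure_union_le _ _
      _ = ℙ (⋃ i ∈ T, {ω | K ω = i}) := by rw [null_gt hbin, add_zero]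
      _ ≤ ∑ i ∈ T, ℙ {ω | K ω = i} := measure_biUnion_finset_le _ _
  have h2 : (ℙ S).toReal ≤ (∑ i ∈ T, ℙ {ω | K ω = i}).toReal :=
    ENNReal.toReal_mono (ENNReal.sum_ne_top.mpr (fun i _ => measure_ne_top _ _)) h1
  rw [ENNReal.toReal_sum (fun i _ => measure_ne_top _ _)] at h2
  simpa [bpmf, hbin] using h2

end Prob

lemma chernoff_sum_s19 (n : ℕ) (p x : ℝ) :
    ∑ i ∈ Finset.range (n+1), x^i * bpmf n p i = (x*p + (1-p))^n := by
  rw [add_pow]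
  apply Finset.sum_congr rfl
  intro i hi
  rw [bpmf, mul_pow]
  ring

lemma bpmf_pos {n i : ℕ} {p : ℝ} (hp0 : 0 < p) (hp1 : p < 1) (hi : i ≤ n) : 0 < bpmf n p i := by
  have := Nat.choose_pos hi
  have h1 : (0:ℝ) < (n.choose i : ℝ) := by exact_mod_cast this
  have h2 : (0:ℝ) < 1 - p := by linarith
  exact mul_pos (mul_pos h1 (pow_pos hp0 i)) (pow_pos h2 _)

lemma bpmf_nonneg {n i : ℕ} {p : ℝ} (hp0 : 0 ≤ p) (hp1 : p ≤ 1) : 0 ≤ bpmf n p i := by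
  have h2 : (0:ℝ) ≤ 1 - p := by linarith
  exact mul_nonneg (mul_nonneg (Nat.cast_nonneg _) (pow_nonneg hp0 i)) (pow_nonneg h2 _)

section Chernoff
variable {Ω : Type*} [MeasureSpace Ω] [IsProbabilityMeasure (ℙ : Measure Ω)]
  {n : ℕ} {p : ℝ} {K : Ω → ℕ}

lemma upper_tail_chernoff
    (hbin : ∀ i : ℕ, (ℙ {ω | K ω = i}).toReal = n.choose i * p ^ i * (1 - p) ^ (n - i))
    (hn : 0 < n) (hp0 : 0 < p) (hp1 : p < 1) (z L : ℝ) (hpz : p < z) (hz1 : z < 1)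
    (hL : L ≤ (n:ℝ) * (z*Real.log (z/p) + (1-z)*Real.log ((1-z)/(1-p)))) :
    (ℙ {ω | (n:ℝ)*z ≤ (K ω:ℝ)}).toReal < Real.exp (-L) := by
  have hz0 : 0 < z := lt_trans hp0 hpz
  have h1z : 0 < 1 - z := by linarith
  have h1p : 0 < 1 - p := by linarith
  have hnR : (0:ℝ) < n := by exact_mod_cast hn
  set c : ℝ := (n:ℝ)*z with hc
  have hc0 : 0 < c := mul_pos hnR hz0
  set T : Finset ℕ := (range (n+1)).filter (fun i => c ≤ (i:ℝ)) with hT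
  have hsub : {ω | c ≤ (K ω:ℝ)} ⊆ (⋃ i ∈ T, {ω | K ω = i}) ∪ {ω | n < K ω} := by
    intro ω hω
    simp only [Set.mem_setOf_eq] at hω
    by_cases h : K ω ≤ n
    · left
      exact Set.mem_biUnion (Finset.mem_filter.mpr ⟨Finset.mem_range.mpr (by omega), hω⟩) rfl
    · right; simp only [Set.mem_setOf_eq]; omega
  have step1 := tail_le hbin T _ hsub
  set r : ℝ := z*(1-p)/(p*(1-z)) with hr
  have hrpos : 0 < r := div_pos (mul_pos hz0 h1p) (mul_pos hp0 h1z)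
  have hr1 : 1 < r := by rw [hr, lt_div_iff₀ (mul_pos hp0 h1z)]; nlinarith
  set t : ℝ := Real.log r with htdef
  have ht : 0 < t := Real.log_pos hr1
  have het : Real.exp t = r := Real.exp_log hrpos
  have step2 : ∑ i ∈ T, bpmf n p i ≤ ∑ i ∈ T, Real.exp (t*((i:ℝ)-c)) * bpmf n p i := by
    apply Finset.sum_le_sum
    intro i hi
    obtain ⟨hin, hic⟩ := mem_filter.mp hi
    have hin' : i ≤ n := by simpa using Nat.lt_succ_iff.mp (mem_range.mp hin)
    have h1 : (1:ℝ) ≤ Real.exp (t*((i:ℝ)-c)) :=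
      Real.one_le_exp (mul_nonneg ht.le (by linarith))
    exact le_mul_of_one_le_left (bpmf_pos hp0 hp1 hin').le h1
  have step3 : ∑ i ∈ T, Real.exp (t*((i:ℝ)-c)) * bpmf n p i
      < ∑ i ∈ range (n+1), Real.exp (t*((i:ℝ)-c)) * bpmf n p i := by
    apply Finset.sum_lt_sum_of_subset (filter_subset _ _) (i := 0)
      (mem_range.mpr (by omega))
    · simp only [hT, mem_filter, mem_range]
      push_neg
      intro _
      simp only [Nat.cast_zero]
      linarith
    · exact mul_pos (Real.exp_pos _) (bpmf_pos hp0 hp1 (Nat.zero_le n))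
    · intro j _ _
      exact mul_nonneg (Real.exp_pos _).le (bpmf_nonneg hp0.le hp1.le)
  have step4 : ∑ i ∈ range (n+1), Real.exp (t*((i:ℝ)-c)) * bpmf n p i
      = Real.exp (-(t*c)) * ((Real.exp t)*p + (1-p))^n := by
    rw [← chernoff_sum_s19 n p (Real.exp t), Finset.mul_sum]
    apply sum_congr rfl
    intro i _
    rw [show t*((i:ℝ)-c) = (i:ℝ)*t + -(t*c) by ring, Real.exp_add, Real.exp_nat_mul]
    ring
  have hXpos : (0:ℝ) < (1-p)/(1-z) := div_pos h1p h1z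
  have hX : Real.exp t * p + (1-p) = (1-p)/(1-z) := by
    rw [het, hr]
    field_simp
    ring
  have hpow : ((1-p)/(1-z))^n = Real.exp ((n:ℝ) * Real.log ((1-p)/(1-z))) := by
    rw [← Real.log_pow, Real.exp_log (pow_pos hXpos n)]
  have step5 : Real.exp (-(t*c)) * ((Real.exp t)*p + (1-p))^n
      = Real.exp ((n:ℝ) * Real.log ((1-p)/(1-z)) + -(t*c)) := by
    rw [hX, hpow, ← Real.exp_add]
    ring_nf
  have hexp_eq : (n:ℝ) * Real.log ((1-p)/(1-z)) + -(t*c)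
      = -((n:ℝ) * (z*Real.log (z/p) + (1-z)*Real.log ((1-z)/(1-p)))) := by
    rw [htdef, hr, hc]
    rw [Real.log_div (mul_pos hz0 h1p).ne' (mul_pos hp0 h1z).ne',
      Real.log_mul hz0.ne' h1p.ne', Real.log_mul hp0.ne' h1z.ne',
      Real.log_div h1p.ne' h1z.ne', Real.log_div hz0.ne' hp0.ne',
      Real.log_div h1z.ne' h1p.ne']
    ring
  have step6 : Real.exp ((n:ℝ) * Real.log ((1-p)/(1-z)) + -(t*c)) ≤ Real.exp (-L) := by
    rw [hexp_eq]
    exact Real.exp_le_exp.mpr (by linarith)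
  calc (ℙ {ω | (n:ℝ)*z ≤ (K ω:ℝ)}).toReal ≤ ∑ i ∈ T, bpmf n p i := step1
    _ ≤ ∑ i ∈ T, Real.exp (t*((i:ℝ)-c)) * bpmf n p i := step2
    _ < ∑ i ∈ range (n+1), Real.exp (t*((i:ℝ)-c)) * bpmf n p i := step3
    _ = Real.exp (-(t*c)) * ((Real.exp t)*p + (1-p))^n := step4
    _ = Real.exp ((n:ℝ) * Real.log ((1-p)/(1-z)) + -(t*c)) := step5
    _ ≤ Real.exp (-L) := step6

lemma lower_tail_chernoff
    (hbin : ∀ i : ℕ, (ℙ {ω | K ω = i}).toReal = n.choose i * p ^ i * (1 - p) ^ (n - i))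
    (hn : 0 < n) (hp0 : 0 < p) (hp1 : p < 1) (z L : ℝ) (hz0 : 0 < z) (hzp : z < p)
    (hL : L ≤ (n:ℝ) * (z*Real.log (z/p) + (1-z)*Real.log ((1-z)/(1-p)))) :
    (ℙ {ω | (K ω:ℝ) ≤ (n:ℝ)*z}).toReal < Real.exp (-L) := by
  have hz1 : z < 1 := lt_trans hzp hp1
  have h1z : 0 < 1 - z := by linarith
  have h1p : 0 < 1 - p := by linarith
  have hnR : (0:ℝ) < n := by exact_mod_cast hn
  set c : ℝ := (n:ℝ)*z with hc
  have hcn : c < n := by rw [hc]; nlinarith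
  set T : Finset ℕ := (range (n+1)).filter (fun i => (i:ℝ) ≤ c) with hT
  have hsub : {ω | (K ω:ℝ) ≤ c} ⊆ (⋃ i ∈ T, {ω | K ω = i}) ∪ {ω | n < K ω} := by
    intro ω hω
    simp only [Set.mem_setOf_eq] at hω
    by_cases h : K ω ≤ n
    · left
      exact Set.mem_biUnion (Finset.mem_filter.mpr ⟨Finset.mem_range.mpr (by omega), hω⟩) rfl
    · right; simp only [Set.mem_setOf_eq]; omega
  have step1 := tail_le hbin T _ hsub
  set r : ℝ := z*(1-p)/(p*(1-z)) with hr
  have hrpos : 0 < r := div_pos (mul_pos hz0 h1p) (mul_pos hp0 h1z)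
  have hr1 : r < 1 := by rw [hr, div_lt_one (mul_pos hp0 h1z)]; nlinarith
  set t : ℝ := -Real.log r with htdef
  have ht : 0 < t := by rw [htdef, neg_pos]; exact Real.log_neg hrpos hr1
  have het : Real.exp (-t) = r := by rw [htdef, neg_neg, Real.exp_log hrpos]
  have step2 : ∑ i ∈ T, bpmf n p i ≤ ∑ i ∈ T, Real.exp (t*(c-(i:ℝ))) * bpmf n p i := by
    apply Finset.sum_le_sum
    intro i hi
    obtain ⟨hin, hic⟩ := mem_filter.mp hi
    have hin' : i ≤ n := by simpa using Nat.lt_succ_iff.mp (mem_range.mp hin)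
    have h1 : (1:ℝ) ≤ Real.exp (t*(c-(i:ℝ))) :=
      Real.one_le_exp (mul_nonneg ht.le (by have hic' : (i:ℝ) ≤ c := hic; linarith))
    exact le_mul_of_one_le_left (bpmf_pos hp0 hp1 hin').le h1
  have step3 : ∑ i ∈ T, Real.exp (t*(c-(i:ℝ))) * bpmf n p i
      < ∑ i ∈ range (n+1), Real.exp (t*(c-(i:ℝ))) * bpmf n p i := by
    apply Finset.sum_lt_sum_of_subset (filter_subset _ _) (i := n)
      (mem_range.mpr (by omega))
    · simp only [hT, mem_filter, mem_range]
      push_neg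
      intro _
      linarith
    · exact mul_pos (Real.exp_pos _) (bpmf_pos hp0 hp1 le_rfl)
    · intro j _ _
      exact mul_nonneg (Real.exp_pos _).le (bpmf_nonneg hp0.le hp1.le)
  have step4 : ∑ i ∈ range (n+1), Real.exp (t*(c-(i:ℝ))) * bpmf n p i
      = Real.exp (t*c) * ((Real.exp (-t))*p + (1-p))^n := by
    rw [← chernoff_sum_s19 n p (Real.exp (-t)), Finset.mul_sum]
    apply sum_congr rfl
    intro i _
    rw [show t*(c-(i:ℝ)) = (i:ℝ)*(-t) + t*c by ring, Real.exp_add, Real.exp_nat_mul]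
    ring
  have hXpos : (0:ℝ) < (1-p)/(1-z) := div_pos h1p h1z
  have hX : Real.exp (-t) * p + (1-p) = (1-p)/(1-z) := by
    rw [het, hr]
    field_simp
    ring
  have hpow : ((1-p)/(1-z))^n = Real.exp ((n:ℝ) * Real.log ((1-p)/(1-z))) := by
    rw [← Real.log_pow, Real.exp_log (pow_pos hXpos n)]
  have step5 : Real.exp (t*c) * ((Real.exp (-t))*p + (1-p))^n
      = Real.exp ((n:ℝ) * Real.log ((1-p)/(1-z)) + t*c) := by
    rw [hX, hpow, ← Real.exp_add]
    ring_nf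
  have hexp_eq : (n:ℝ) * Real.log ((1-p)/(1-z)) + t*c
      = -((n:ℝ) * (z*Real.log (z/p) + (1-z)*Real.log ((1-z)/(1-p)))) := by
    rw [htdef, hr, hc]
    rw [Real.log_div (mul_pos hz0 h1p).ne' (mul_pos hp0 h1z).ne',
      Real.log_mul hz0.ne' h1p.ne', Real.log_mul hp0.ne' h1z.ne',
      Real.log_div h1p.ne' h1z.ne', Real.log_div hz0.ne' hp0.ne',
      Real.log_div h1z.ne' h1p.ne']
    ring
  have step6 : Real.exp ((n:ℝ) * Real.log ((1-p)/(1-z)) + t*c) ≤ Real.exp (-L) := by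
    rw [hexp_eq]
    exact Real.exp_le_exp.mpr (by linarith)
  calc (ℙ {ω | (K ω:ℝ) ≤ (n:ℝ)*z}).toReal ≤ ∑ i ∈ T, bpmf n p i := step1
    _ ≤ ∑ i ∈ T, Real.exp (t*(c-(i:ℝ))) * bpmf n p i := step2
    _ < ∑ i ∈ range (n+1), Real.exp (t*(c-(i:ℝ))) * bpmf n p i := step3
    _ = Real.exp (t*c) * ((Real.exp (-t))*p + (1-p))^n := step4
    _ = Real.exp ((n:ℝ) * Real.log ((1-p)/(1-z)) + t*c) := step5
    _ ≤ Real.exp (-L) := step6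

end Chernoff

/-- Let `K` be binomial with parameters `n ≥ 1` and `p ∈ (0,1)`, let `η ∈ (0,1)`, and let
`z₁ = p + (1 - 2p - √(1 + 18np(1-p)/ln(2/η))) / (2/3 + 3n/ln(2/η))` and
`z₂ = p + (1 - 2p + √(1 + 18np(1-p)/ln(2/η))) / (2/3 + 3n/ln(2/η))`.
Then `Pr{K ≤ n z₁} < η/2` and `Pr{K ≥ n z₂} < η/2`. -/
theorem binomial_tail_bounds {Ω : Type*} [MeasureSpace Ω] [IsProbabilityMeasure (ℙ : Measure Ω)]
    (n : ℕ) (hn : 0 < n) (p : ℝ) (hp0 : 0 < p) (hp1 : p < 1)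
    (K : Ω → ℕ) (hK : Measurable K)
    (hbin : ∀ i : ℕ, (ℙ {ω | K ω = i}).toReal = n.choose i * p ^ i * (1 - p) ^ (n - i))
    (η : ℝ) (hη0 : 0 < η) (hη1 : η < 1)
    (z₁ z₂ : ℝ)
    (hz₁ : z₁ = p + (1 - 2 * p - Real.sqrt (1 + 18 * n * p * (1 - p) / Real.log (2 / η))) /
      (2 / 3 + 3 * n / Real.log (2 / η)))
    (hz₂ : z₂ = p + (1 - 2 * p + Real.sqrt (1 + 18 * n * p * (1 - p) / Real.log (2 / η))) /
      (2 / 3 + 3 * n / Real.log (2 / η))) :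
    (ℙ {ω | (K ω : ℝ) ≤ n * z₁}).toReal < η / 2 ∧
      (ℙ {ω | n * z₂ ≤ (K ω : ℝ)}).toReal < η / 2 := by
  have h1p : (0:ℝ) < 1 - p := by linarith
  have hnR : (0:ℝ) < n := by exact_mod_cast hn
  set L : ℝ := Real.log (2 / η) with hLdef
  have h2η : (1:ℝ) < 2/η := by rw [lt_div_iff₀ hη0]; linarith
  have hL : 0 < L := Real.log_pos h2η
  have hexpL : Real.exp (-L) = η/2 := by
    rw [hLdef, Real.exp_neg, Real.exp_log (by positivity), inv_div]
  have hη2 : 0 < η/2 := by positivity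
  have hApos : (0:ℝ) < 18*(n:ℝ)*p*(1-p)/L :=
    div_pos (by positivity) hL
  set S : ℝ := Real.sqrt (1 + 18 * (n:ℝ) * p * (1 - p) / L) with hSdef
  have hS2 : S^2 = 1 + 18*(n:ℝ)*p*(1-p)/L := Real.sq_sqrt (by linarith)
  have hS0 : 0 ≤ S := Real.sqrt_nonneg _
  have hS1 : 1 < S := one_lt_of_sq hS0 (by rw [hS2]; linarith)
  have hD : (0:ℝ) < 2/3 + 3*(n:ℝ)/L := by positivity
  -- root identities
  have hroot₁ : (n:ℝ)*(p-z₁)^2 = 2*L*((2*p+z₁)/3)*(1-(2*p+z₁)/3) :=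
    root_identity (nn := (n:ℝ)) hnR.le hL (ε := -1) (by norm_num) hS2 (by rw [hz₁]; ring)
  have hroot₂ : (n:ℝ)*(p-z₂)^2 = 2*L*((2*p+z₂)/3)*(1-(2*p+z₂)/3) :=
    root_identity (nn := (n:ℝ)) hnR.le hL (ε := 1) (by norm_num) hS2 (by rw [hz₂]; ring)
  -- position of roots
  have hz₁p : z₁ < p := by
    have hnum : 1 - 2*p - S < 0 := by linarith
    have := div_neg_of_neg_of_pos hnum hD
    rw [hz₁]; linarith
  have hpz₂ : p < z₂ := by
    have hnum : 0 < 1 - 2*p + S := by linarith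
    have := div_pos hnum hD
    rw [hz₂]; linarith
  -- a-intervals
  have key₁ : 0 < (2*p+z₁)/3 ∧ (2*p+z₁)/3 < 1 := by
    have hpos : 0 < (n:ℝ)*(p-z₁)^2 := mul_pos hnR (pow_pos (by linarith) 2)
    exact unit_interval_of_mul_pos (prod_pos_of_eq hL hpos hroot₁)
  have key₂ : 0 < (2*p+z₂)/3 ∧ (2*p+z₂)/3 < 1 := by
    have hsq : 0 < (p-z₂)^2 := by
      rw [show (p-z₂)^2 = (z₂-p)^2 by ring]
      exact pow_pos (by linarith) 2
    have hpos : 0 < (n:ℝ)*(p-z₂)^2 := mul_pos hnR hsq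
    exact unit_interval_of_mul_pos (prod_pos_of_eq hL hpos hroot₂)
  -- L as n * quadratic
  have hden₁ : (0:ℝ) < 2*((2*p+z₁)/3)*(1-(2*p+z₁)/3) :=
    mul_pos (by linarith [key₁.1]) (by linarith [key₁.2])
  have hden₂ : (0:ℝ) < 2*((2*p+z₂)/3)*(1-(2*p+z₂)/3) :=
    mul_pos (by linarith [key₂.1]) (by linarith [key₂.2])
  have hLq₁ : L = (n:ℝ) * ((z₁-p)^2 / (2*((2*p+z₁)/3)*(1-(2*p+z₁)/3))) := by
    rw [mul_div_assoc', eq_div_iff hden₁.ne']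
    linear_combination -hroot₁
  have hLq₂ : L = (n:ℝ) * ((z₂-p)^2 / (2*((2*p+z₂)/3)*(1-(2*p+z₂)/3))) := by
    rw [mul_div_assoc', eq_div_iff hden₂.ne']
    linear_combination -hroot₂
  constructor
  · -- lower tail
    rcases lt_trichotomy z₁ 0 with hz | hz | hz
    · -- z₁ < 0 : empty event
      have hempty : {ω | (K ω : ℝ) ≤ (n:ℝ) * z₁} = ∅ := by
        ext ω
        simp only [Set.mem_setOf_eq, Set.mem_empty_iff_false, iff_false, not_le]
        have : (n:ℝ)*z₁ < 0 := mul_neg_of_pos_of_neg hnR hz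
        have h0 : (0:ℝ) ≤ (K ω : ℝ) := Nat.cast_nonneg _
        linarith
      rw [hempty]
      simpa using hη2
    · -- z₁ = 0
      have hsub : {ω | (K ω : ℝ) ≤ (n:ℝ) * z₁} ⊆
          (⋃ i ∈ ({0} : Finset ℕ), {ω | K ω = i}) ∪ {ω | n < K ω} := by
        intro ω hω
        simp only [Set.mem_setOf_eq] at hω
        rw [hz, mul_zero] at hω
        left
        apply Set.mem_biUnion (Finset.mem_singleton_self 0)
        have h0 : (0:ℝ) ≤ (K ω : ℝ) := Nat.cast_nonneg _
        have : (K ω : ℝ) = 0 := le_antisymm hω h0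
        simpa using this
      have hb := tail_le hbin {0} _ hsub
      rw [Finset.sum_singleton] at hb
      have hb0 : bpmf n p 0 = (1-p)^n := by
        simp [bpmf]
      rw [hb0] at hb
      have hq : (z₁-p)^2 / (2*((2*p+z₁)/3)*(1-(2*p+z₁)/3)) = 9*p/(4*(3-2*p)) := by
        rw [hz] at hden₁ ⊢
        rw [div_eq_div_iff hden₁.ne' (by linarith : (0:ℝ) < 4*(3-2*p)).ne']
        ring
      have hLlt : L < (n:ℝ) * (-Real.log (1-p)) := by
        have he := endpoint_ineq hp0 hp1
        rw [hLq₁, hq]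
        exact mul_lt_mul_of_pos_left he hnR
      have hpow : (1-p)^n = Real.exp ((n:ℝ) * Real.log (1-p)) := by
        rw [← Real.log_pow, Real.exp_log (pow_pos h1p n)]
      have : (1-p)^n < η/2 := by
        rw [hpow, ← hexpL]
        exact Real.exp_lt_exp.mpr (by linarith)
      linarith
    · -- 0 < z₁ : Chernoff
      have hkl := kl_ge_quad hp0 hp1 hz (by linarith : z₁ < 1)
      have hLle : L ≤ (n:ℝ) * (z₁*Real.log (z₁/p) + (1-z₁)*Real.log ((1-z₁)/(1-p))) := by
        rw [hLq₁]
        exact mul_le_mul_of_nonneg_left hkl hnR.le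
      have := lower_tail_chernoff hbin hn hp0 hp1 z₁ L hz hz₁p hLle
      rwa [hexpL] at this
  · -- upper tail
    rcases lt_trichotomy z₂ 1 with hz | hz | hz
    · -- p < z₂ < 1 : Chernoff
      have hkl := kl_ge_quad hp0 hp1 (by linarith : 0 < z₂) hz
      have hLle : L ≤ (n:ℝ) * (z₂*Real.log (z₂/p) + (1-z₂)*Real.log ((1-z₂)/(1-p))) := by
        rw [hLq₂]
        exact mul_le_mul_of_nonneg_left hkl hnR.le
      have := upper_tail_chernoff hbin hn hp0 hp1 z₂ L hpz₂ hz hLle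
      rwa [hexpL] at this
    · -- z₂ = 1
      have hsub : {ω | (n:ℝ) * z₂ ≤ (K ω : ℝ)} ⊆
          (⋃ i ∈ ({n} : Finset ℕ), {ω | K ω = i}) ∪ {ω | n < K ω} := by
        intro ω hω
        simp only [Set.mem_setOf_eq] at hω
        rw [hz, mul_one] at hω
        by_cases hKn : K ω ≤ n
        · left
          apply Set.mem_biUnion (Finset.mem_singleton_self n)
          have : (n:ℕ) ≤ K ω := by exact_mod_cast hω
          simp only [Set.mem_setOf_eq]
          omega
        · right
          simp only [Set.mem_setOf_eq]
          omega
      have hb := tail_le hbin {n} _ hsub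
      rw [Finset.sum_singleton] at hb
      have hbn : bpmf n p n = p^n := by
        simp [bpmf]
      rw [hbn] at hb
      have hq : (z₂-p)^2 / (2*((2*p+z₂)/3)*(1-(2*p+z₂)/3)) = 9*(1-p)/(4*(3-2*(1-p))) := by
        rw [hz] at hden₂ ⊢
        rw [div_eq_div_iff hden₂.ne' (by linarith : (0:ℝ) < 4*(3-2*(1-p))).ne']
        ring
      have hLlt : L < (n:ℝ) * (-Real.log p) := by
        have he := endpoint_ineq h1p (by linarith : 1 - p < 1)
        rw [show (1:ℝ) - (1-p) = p by ring] at he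
        rw [hLq₂, hq]
        exact mul_lt_mul_of_pos_left he hnR
      have hpow : p^n = Real.exp ((n:ℝ) * Real.log p) := by
        rw [← Real.log_pow, Real.exp_log (pow_pos hp0 n)]
      have hfin : p^n < η/2 := by
        rw [hpow, ← hexpL]
        exact Real.exp_lt_exp.mpr (by linarith)
      linarith
    · -- z₂ > 1
      have hsub : {ω | (n:ℝ) * z₂ ≤ (K ω : ℝ)} ⊆ {ω | n < K ω} := by
        intro ω hω
        simp only [Set.mem_setOf_eq] at hω ⊢
        have h1 : (n:ℝ) < (n:ℝ)*z₂ := by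
          calc (n:ℝ) = (n:ℝ)*1 := by ring
            _ < (n:ℝ)*z₂ := mul_lt_mul_of_pos_left hz hnR
        have h2 : (n:ℝ) < (K ω : ℝ) := lt_of_lt_of_le h1 hω
        exact_mod_cast h2
      have h0 : ℙ {ω | (n:ℝ) * z₂ ≤ (K ω : ℝ)} = 0 :=
        measure_mono_null hsub (null_gt hbin)
      rw [h0]
      simpa using hη2
end
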